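/- arXiv:2603.30017 — 8 statements merged into one kernel-verified Lean document; each statement's English description precedes it below -/
import Mathlib

section
/- Let Σ = {1,…,d} be a finite alphabet and p a probability vector on Σ with p(a) > 0 for all a. Let (U_a)_{a∈Σ} be independent random variables, each uniformly distributed on [0,1]. Then almost surely the argmax A = argmax_{a∈Σ} p(a)/(−log U_a) is uniquely defined, and with V = U_A one has, for every x ∈ [0,1], P(V ≤ x) = Σ_{a∈Σ} p(a) x^{1/p(a)}. -/
open MeasureTheory ProbabilityTheory

lemma gac_unif_Iio {y : ℝ} (hy : y ≤ 1) :
    (volume.restrict (Set.Icc (0:ℝ) 1)) (Set.Iio y) = ENNReal.ofReal y := by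
  rw [Measure.restrict_apply measurableSet_Iio]
  rcases le_or_gt 0 y with h0 | h0
  · have : Set.Iio y ∩ Set.Icc (0:ℝ) 1 = Set.Ico 0 y := by
      ext u
      simp only [Set.mem_inter_iff, Set.mem_Iio, Set.mem_Icc, Set.mem_Ico]
      constructor
      · rintro ⟨h1, h2, h3⟩; exact ⟨h2, h1⟩
      · rintro ⟨h1, h2⟩; exact ⟨h2, h1, le_trans h2.le hy⟩
    rw [this, Real.volume_Ico, sub_zero]
  · have : Set.Iio y ∩ Set.Icc (0:ℝ) 1 = ∅ := by
      ext u
      simp only [Set.mem_inter_iff, Set.mem_Iio, Set.mem_Icc, Set.mem_empty_iff_false, iff_false]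
      rintro ⟨h1, h2, h3⟩; linarith
    rw [this]
    simp [ENNReal.ofReal_of_nonpos h0.le]

lemma gac_unif_singleton (y : ℝ) :
    (volume.restrict (Set.Icc (0:ℝ) 1)) {y} = 0 :=
  le_antisymm (le_trans (Measure.restrict_le_self _) (by simp)) zero_le

lemma gac_unif_Ioo_compl :
    (volume.restrict (Set.Icc (0:ℝ) 1)) (Set.Ioo (0:ℝ) 1)ᶜ = 0 := by
  rw [Measure.restrict_apply measurableSet_Ioo.compl]
  have : (Set.Ioo (0:ℝ) 1)ᶜ ∩ Set.Icc 0 1 ⊆ {0} ∪ {1} := by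
    rintro u ⟨h1, h2, h3⟩
    simp only [Set.mem_compl_iff, Set.mem_Ioo, not_and, not_lt] at h1
    rcases lt_or_eq_of_le h2 with h | h
    · right; simpa using le_antisymm h3 (h1 h)
    · left; simp [h.symm]
  refine le_antisymm (le_trans (measure_mono this) ?_) zero_le
  refine le_trans (measure_union_le _ _) ?_
  simp

lemma gac_rpow_lt {pa pb u v : ℝ} (hpa : 0 < pa) (hpb : 0 < pb)
    (hu : u ∈ Set.Ioo (0:ℝ) 1) (hv : v ∈ Set.Ioo (0:ℝ) 1) :
    u ^ (1 / pb) < v ^ (1 / pa) ↔ pb / (-Real.log u) < pa / (-Real.log v) := by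
  obtain ⟨hu0, hu1⟩ := hu
  obtain ⟨hv0, hv1⟩ := hv
  have hLu : 0 < -Real.log u := by have := Real.log_neg hu0 hu1; linarith
  have hLv : 0 < -Real.log v := by have := Real.log_neg hv0 hv1; linarith
  rw [← Real.log_lt_log_iff (Real.rpow_pos_of_pos hu0 _) (Real.rpow_pos_of_pos hv0 _),
    Real.log_rpow hu0, Real.log_rpow hv0, div_lt_div_iff₀ hLu hLv]
  constructor
  · intro h
    have h2 : pa * pb * ((1/pb) * Real.log u) < pa * pb * ((1/pa) * Real.log v) := by
      apply mul_lt_mul_of_pos_left h (by positivity)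
    rw [show pa * pb * ((1/pb) * Real.log u) = pa * Real.log u * (pb / pb) by ring,
      show pa * pb * ((1/pa) * Real.log v) = pb * Real.log v * (pa / pa) by ring,
      div_self hpb.ne', div_self hpa.ne'] at h2
    nlinarith
  · intro h
    have h2 : pa * Real.log u < pb * Real.log v := by nlinarith
    have h3 : (1 / (pa * pb)) * (pa * Real.log u) < (1 / (pa * pb)) * (pb * Real.log v) :=
      mul_lt_mul_of_pos_left h2 (by positivity)
    rw [show (1 / (pa * pb)) * (pa * Real.log u) = (1/pb) * Real.log u * (pa / pa) by ring,
      show (1 / (pa * pb)) * (pb * Real.log v) = (1/pa) * Real.log v * (pb / pb) by ring,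
      div_self hpb.ne', div_self hpa.ne'] at h3
    linarith

/-- Let `p` be a probability vector on `Fin d` with positive entries and let
`(U_a)` be independent uniform random variables on `[0,1]`.  Then almost surely
the argmax `A = argmax_a p(a)/(−log U_a)` is uniquely defined and, with
`V = U_A`, for every `x ∈ [0,1]`, `P(V ≤ x) = ∑_a p(a) x^{1/p(a)}`. -/
theorem gumbel_argmax_cdf {d : ℕ} (hd : 0 < d) (p : Fin d → ℝ)
    (hp_pos : ∀ a, 0 < p a) (hp_sum : ∑ a, p a = 1)
    {Ω : Type*} [MeasurableSpace Ω] (μ : Measure Ω) [IsProbabilityMeasure μ]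
    (U : Fin d → Ω → ℝ) (hU_meas : ∀ a, Measurable (U a))
    (hU_indep : iIndepFun U μ)
    (hU_unif : ∀ a, Measure.map (U a) μ = volume.restrict (Set.Icc (0:ℝ) 1)) :
    ∃ A : Ω → Fin d, Measurable A ∧
      (∀ᵐ ω ∂μ, ∀ b, b ≠ A ω →
        p b / (-Real.log (U b ω)) < p (A ω) / (-Real.log (U (A ω) ω))) ∧
      ∀ x ∈ Set.Icc (0:ℝ) 1,
        μ {ω | U (A ω) ω ≤ x} = ENNReal.ofReal (∑ a, p a * x ^ (1 / p a)) := by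
  classical
  haveI : Nonempty (Fin d) := ⟨⟨0, hd⟩⟩
  set g : Fin d → Ω → ℝ := fun a ω => (U a ω) ^ (1 / p a) with hg_def
  have hg_meas : ∀ a, Measurable (g a) := fun a =>
    (Real.continuous_rpow_const (one_div_nonneg.2 (hp_pos a).le)).measurable.comp (hU_meas a)
  -- the argmax
  have hM_ne : ∀ ω, (Finset.univ.filter fun a => ∀ b, g b ω ≤ g a ω).Nonempty := by
    intro ω
    obtain ⟨c, _, hc⟩ := Finset.exists_max_image Finset.univ (fun a => g a ω)
      ⟨⟨0, hd⟩, Finset.mem_univ _⟩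
    exact ⟨c, Finset.mem_filter.2 ⟨Finset.mem_univ _, fun b => hc b (Finset.mem_univ b)⟩⟩
  set A : Ω → Fin d := fun ω =>
    (Finset.univ.filter fun a => ∀ b, g b ω ≤ g a ω).min' (hM_ne ω) with hA_def
  have hA_max : ∀ ω b, g b ω ≤ g (A ω) ω := fun ω b =>
    (Finset.mem_filter.1 (Finset.min'_mem _ (hM_ne ω))).2 b
  have hA_min : ∀ ω z, (∀ b, g b ω ≤ g z ω) → A ω ≤ z := fun ω z hz =>
    Finset.min'_le _ _ (Finset.mem_filter.2 ⟨Finset.mem_univ _, hz⟩)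
  have hA_meas : Measurable A := by
    apply measurable_to_countable'
    intro y
    have hset : A ⁻¹' {y} =
        {ω | ∀ b, g b ω ≤ g y ω} ∩ ⋂ z : Fin d, {ω | z < y → ¬ ∀ b, g b ω ≤ g z ω} := by
      ext ω
      simp only [Set.mem_preimage, Set.mem_singleton_iff, Set.mem_inter_iff, Set.mem_iInter,
        Set.mem_setOf_eq]
      constructor
      · rintro rfl
        exact ⟨hA_max ω, fun z hz hP => absurd (hA_min ω z hP) (not_le.2 hz)⟩
      · rintro ⟨h1, h2⟩
        have h3 : A ω ≤ y := hA_min ω y h1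
        rcases lt_or_eq_of_le h3 with h | h
        · exact absurd (hA_max ω) (h2 (A ω) h)
        · exact h
    rw [hset]
    refine MeasurableSet.inter ?_ (MeasurableSet.iInter fun z => ?_)
    · rw [Set.setOf_forall]
      exact MeasurableSet.iInter fun b => measurableSet_le (hg_meas b) (hg_meas y)
    · by_cases hz : z < y
      · simp only [hz, true_implies]
        have : {ω | ¬ ∀ b, g b ω ≤ g z ω} = (⋂ b, {ω | g b ω ≤ g z ω})ᶜ := by
          ext ω; simp
        rw [this]
        exact (MeasurableSet.iInter fun b => measurableSet_le (hg_meas b) (hg_meas z)).compl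
      · simp only [hz, false_implies]
        simp
  have hA_strict : ∀ ω, (∀ a b, a ≠ b → g a ω ≠ g b ω) → ∀ b, b ≠ A ω → g b ω < g (A ω) ω :=
    fun ω hne b hb => lt_of_le_of_ne (hA_max ω b) (hne b (A ω) hb)
  -- the good event
  have hIoo_ae : ∀ a, ∀ᵐ ω ∂μ, U a ω ∈ Set.Ioo (0:ℝ) 1 := by
    intro a
    rw [ae_iff]
    have h1 : {ω | ¬ U a ω ∈ Set.Ioo (0:ℝ) 1} = U a ⁻¹' (Set.Ioo (0:ℝ) 1)ᶜ := rfl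
    rw [h1, ← Measure.map_apply (hU_meas a) measurableSet_Ioo.compl, hU_unif a,
      gac_unif_Ioo_compl]
  have hne_ae : ∀ a b, a ≠ b → ∀ᵐ ω ∂μ,
      U a ω ∈ Set.Ioo (0:ℝ) 1 → U b ω ∈ Set.Ioo (0:ℝ) 1 → g a ω ≠ g b ω := by
    intro a b hab
    have hind : IndepFun (U a) (U b) μ := hU_indep.indepFun hab
    have hmap : μ.map (fun ω => (U a ω, U b ω)) = (μ.map (U a)).prod (μ.map (U b)) :=
      (indepFun_iff_map_prod_eq_prod_map_map (hU_meas a).aemeasurable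
        (hU_meas b).aemeasurable).1 hind
    set f : ℝ → ℝ := fun u => u ^ ((1 / p a) * p b) with hf_def
    have hf : Measurable f :=
      (Real.continuous_rpow_const (mul_nonneg (one_div_nonneg.2 (hp_pos a).le) (hp_pos b).le)).measurable
    have hS : MeasurableSet {q : ℝ × ℝ | q.2 = f q.1} :=
      measurableSet_eq_fun measurable_snd (hf.comp measurable_fst)
    have h0 : μ {ω | U b ω = f (U a ω)} = 0 := by
      have h1 : {ω | U b ω = f (U a ω)} =
          (fun ω => (U a ω, U b ω)) ⁻¹' {q : ℝ × ℝ | q.2 = f q.1} := rfl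
      rw [h1, ← Measure.map_apply ((hU_meas a).prodMk (hU_meas b)) hS, hmap,
        Measure.prod_apply hS]
      have h2 : ∀ v : ℝ, (μ.map (U b)) {(f v : ℝ)} = 0 := fun v => by
        rw [hU_unif b]; exact gac_unif_singleton _
      have h3 : ∀ v : ℝ, (Prod.mk v ⁻¹' {q : ℝ × ℝ | q.2 = f q.1}) = {f v} := by
        intro v; ext w; simp [Set.mem_preimage]
      simp [h3, h2]
    filter_upwards [measure_eq_zero_iff_ae_notMem.1 h0] with ω hω hua hub heq
    apply hω
    have e1 : U b ω = (g b ω) ^ (p b) := by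
      rw [hg_def]
      rw [← Real.rpow_mul hub.1.le, one_div, inv_mul_cancel₀ (hp_pos b).ne', Real.rpow_one]
    show U b ω = f (U a ω)
    rw [e1, ← heq, hg_def, hf_def]
    rw [← Real.rpow_mul hua.1.le]
  have hGae : ∀ᵐ ω ∂μ,
      (∀ a, U a ω ∈ Set.Ioo (0:ℝ) 1) ∧ ∀ a b, a ≠ b → g a ω ≠ g b ω := by
    have h1 : ∀ᵐ ω ∂μ, ∀ a, U a ω ∈ Set.Ioo (0:ℝ) 1 := ae_all_iff.2 hIoo_ae
    have h2 : ∀ᵐ ω ∂μ, ∀ a b, a ≠ b →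
        U a ω ∈ Set.Ioo (0:ℝ) 1 → U b ω ∈ Set.Ioo (0:ℝ) 1 → g a ω ≠ g b ω := by
      refine ae_all_iff.2 fun a => ae_all_iff.2 fun b => ?_
      by_cases hab : a ≠ b
      · exact (hne_ae a b hab).mono fun ω h _ => h
      · exact Filter.Eventually.of_forall fun ω h => absurd h hab
    filter_upwards [h1, h2] with ω hω1 hω2
    exact ⟨hω1, fun a b hab => hω2 a b hab (hω1 a) (hω1 b)⟩
  refine ⟨A, hA_meas, ?_, ?_⟩
  · filter_upwards [hGae] with ω hω b hb
    obtain ⟨h1, h2⟩ := hω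
    exact (gac_rpow_lt (hp_pos (A ω)) (hp_pos b) (h1 b) (h1 (A ω))).1 (hA_strict ω h2 b hb)
  · intro x hx
    have hpa1 : ∀ a : Fin d, p a ≤ 1 := by
      intro a
      rw [← hp_sum]
      exact Finset.single_le_sum (fun b _ => (hp_pos b).le) (Finset.mem_univ a)
    have key : ∀ a, μ (A ⁻¹' {a} ∩ U a ⁻¹' Set.Iic x) =
        ENNReal.ofReal (p a * x ^ (1 / p a)) := by
      intro a
      set W : Ω → ℝ := fun ω => Finset.univ.sup' Finset.univ_nonempty
        (fun b => if b = a then (-1:ℝ) else g b ω) with hW_def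
      have hW_meas : Measurable W := by
        have hWfun : W = Finset.univ.sup' Finset.univ_nonempty
            (fun b ω => if b = a then (-1:ℝ) else g b ω) := by
          funext ω
          exact (Finset.sup'_apply Finset.univ_nonempty
            (fun b ω => if b = a then (-1:ℝ) else g b ω) ω).symm
        rw [hWfun]
        refine Finset.measurable_sup' Finset.univ_nonempty (fun b _ => ?_)
        by_cases hb : b = a
        · simp only [hb, if_pos rfl]; exact measurable_const
        · simp only [if_neg hb]; exact hg_meas b
      -- independence of U a and W
      have hInd : IndepFun (U a) W μ := by
        have h0 := hU_indep.indepFun_finset {a} (Finset.univ.erase a)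
          (Finset.disjoint_left.2 (by simp)) hU_meas
        set T : Finset (Fin d) := Finset.univ.erase a with hT_def
        set φ1 : (({a} : Finset (Fin d)) → ℝ) → ℝ :=
          fun y => y ⟨a, Finset.mem_singleton_self a⟩ with hφ1_def
        set φ2 : (T → ℝ) → ℝ := fun y =>
          Finset.univ.sup' Finset.univ_nonempty
            (fun b => if hb : b = a then (-1:ℝ)
              else y ⟨b, Finset.mem_erase.2 ⟨hb, Finset.mem_univ b⟩⟩ ^ (1 / p b)) with hφ2_def
        have hφ1 : Measurable φ1 := measurable_pi_apply _
        have hφ2 : Measurable φ2 := by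
          have hφ2fun : φ2 = Finset.univ.sup' Finset.univ_nonempty
              (fun b (y : T → ℝ) => if hb : b = a then (-1:ℝ)
                else y ⟨b, Finset.mem_erase.2 ⟨hb, Finset.mem_univ b⟩⟩ ^ (1 / p b)) := by
            funext y
            exact (Finset.sup'_apply Finset.univ_nonempty
              (fun b (y : T → ℝ) => if hb : b = a then (-1:ℝ)
                else y ⟨b, Finset.mem_erase.2 ⟨hb, Finset.mem_univ b⟩⟩ ^ (1 / p b)) y).symm
          rw [hφ2fun]
          refine Finset.measurable_sup' Finset.univ_nonempty (fun b _ => ?_)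
          by_cases hb : b = a
          · simp only [hb, dif_pos rfl]; exact measurable_const
          · simp only [dif_neg hb]
            exact (Real.continuous_rpow_const
              (one_div_nonneg.2 (hp_pos b).le)).measurable.comp (measurable_pi_apply _)
        have h1 := h0.comp hφ1 hφ2
        have e1 : (φ1 ∘ fun ω (i : ({a} : Finset (Fin d))) => U i ω) = U a := rfl
        have e2 : (φ2 ∘ fun ω (i : T) => U i ω) = W := by
          funext ω
          simp only [Function.comp_apply, hφ2_def, hW_def]
          refine Finset.sup'_congr Finset.univ_nonempty rfl fun b _ => ?_
          by_cases hb : b = a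
          · simp [hb]
          · simp [hb, hg_def]
        rwa [e1, e2] at h1
      -- the law of W
      have hWlaw : ∀ t : ℝ, t ∈ Set.Ioc (0:ℝ) 1 →
          μ {ω | W ω < t} = ENNReal.ofReal (t ^ (1 - p a)) := by
        intro t ht
        set sets : Fin d → Set ℝ := fun b =>
          if b = a then Set.univ else {u : ℝ | u ^ (1 / p b) < t} with hsets_def
        have hsets_meas : ∀ b, MeasurableSet (sets b) := by
          intro b
          by_cases hb : b = a
          · simp [hsets_def, hb]
          · simp only [hsets_def, if_neg hb]
            exact (Real.continuous_rpow_const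
              (one_div_nonneg.2 (hp_pos b).le)).measurable measurableSet_Iio
        have hset : {ω | W ω < t} = ⋂ b ∈ Finset.univ, U b ⁻¹' (sets b) := by
          ext ω
          simp only [Set.mem_setOf_eq, hW_def, Finset.sup'_lt_iff, Set.mem_iInter,
            Set.mem_preimage, Finset.mem_univ, true_implies]
          refine forall_congr' fun b => ?_
          by_cases hb : b = a
          · subst hb
            rw [if_pos rfl]
            simp only [hsets_def, if_pos rfl, Set.mem_univ, iff_true]
            linarith [ht.1]
          · rw [if_neg hb]
            simp only [hsets_def, if_neg hb]
            exact Iff.rfl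
        rw [hset, hU_indep.measure_inter_preimage_eq_mul Finset.univ (fun b _ => hsets_meas b)]
        have hfac : ∀ b, μ (U b ⁻¹' sets b) =
            if b = a then 1 else ENNReal.ofReal (t ^ p b) := by
          intro b
          rw [← Measure.map_apply (hU_meas b) (hsets_meas b), hU_unif b]
          by_cases hb : b = a
          · simp only [hsets_def, hb, if_pos rfl]
            rw [Measure.restrict_apply MeasurableSet.univ, Set.univ_inter, Real.volume_Icc]
            simp
          · simp only [hsets_def, if_neg hb]
            have htp : (t ^ p b) ^ (1 / p b) = t := by
              rw [← Real.rpow_mul ht.1.le, mul_one_div, div_self (hp_pos b).ne', Real.rpow_one]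
            have hiff : ∀ u : ℝ, u ∈ Set.Icc (0:ℝ) 1 → (u ^ (1 / p b) < t ↔ u < t ^ p b) := by
              intro u hu
              constructor
              · intro h
                by_contra hcon
                push_neg at hcon
                have h2 := Real.rpow_le_rpow (Real.rpow_nonneg ht.1.le _) hcon
                  (one_div_nonneg.2 (hp_pos b).le)
                rw [htp] at h2
                linarith
              · intro h
                have h2 := Real.rpow_lt_rpow hu.1 h (one_div_pos.2 (hp_pos b))
                rwa [htp] at h2
            have hseteq : {u : ℝ | u ^ (1 / p b) < t} ∩ Set.Icc 0 1
                = Set.Iio (t ^ p b) ∩ Set.Icc 0 1 := by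
              ext u
              simp only [Set.mem_inter_iff, Set.mem_setOf_eq, Set.mem_Iio]
              constructor
              · rintro ⟨h1, h2⟩; exact ⟨(hiff u h2).1 h1, h2⟩
              · rintro ⟨h1, h2⟩; exact ⟨(hiff u h2).2 h1, h2⟩
            have hms : MeasurableSet {u : ℝ | u ^ (1 / p b) < t} :=
              (Real.continuous_rpow_const
                (one_div_nonneg.2 (hp_pos b).le)).measurable measurableSet_Iio
            rw [Measure.restrict_apply hms,
              hseteq, ← Measure.restrict_apply measurableSet_Iio,
              gac_unif_Iio (Real.rpow_le_one ht.1.le ht.2 (hp_pos b).le)]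
        rw [Finset.prod_congr rfl (fun b _ => hfac b),
          ← Finset.mul_prod_erase Finset.univ _ (Finset.mem_univ a), if_pos rfl, one_mul,
          Finset.prod_congr rfl
            (fun b hb => if_neg (Finset.mem_erase.1 hb).1),
          ← ENNReal.ofReal_prod_of_nonneg (fun b _ => Real.rpow_nonneg ht.1.le _)]
        congr 1
        have hsum : ∑ b ∈ Finset.univ.erase a, p b = 1 - p a := by
          have h5 := Finset.add_sum_erase Finset.univ p (Finset.mem_univ a)
          rw [hp_sum] at h5
          linarith
        calc ∏ b ∈ Finset.univ.erase a, t ^ p b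
            = ∏ b ∈ Finset.univ.erase a, Real.exp (Real.log t * p b) :=
              Finset.prod_congr rfl fun b _ => Real.rpow_def_of_pos ht.1 _
          _ = Real.exp (∑ b ∈ Finset.univ.erase a, Real.log t * p b) :=
              (Real.exp_sum _ _).symm
          _ = Real.exp (Real.log t * (1 - p a)) := by rw [← Finset.mul_sum, hsum]
          _ = t ^ (1 - p a) := (Real.rpow_def_of_pos ht.1 _).symm
      -- replace the event by a nicer one, up to null sets
      have hAE : (A ⁻¹' {a} ∩ U a ⁻¹' Set.Iic x : Set Ω) =ᵐ[μ]
          ({ω | U a ω ≤ x ∧ W ω < (U a ω) ^ (1 / p a)} : Set Ω) := by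
        refine Filter.eventuallyEq_set.2 ?_
        filter_upwards [hGae] with ω hω
        obtain ⟨h1, h2⟩ := hω
        have hga : (0:ℝ) < g a ω := Real.rpow_pos_of_pos (h1 a).1 _
        have hWiff : W ω < g a ω ↔ ∀ b, b ≠ a → g b ω < g a ω := by
          rw [hW_def]
          simp only [Finset.sup'_lt_iff, Finset.mem_univ, true_implies]
          constructor
          · intro h b hb
            have h3 := h b
            rwa [if_neg hb] at h3
          · intro h b
            by_cases hb : b = a
            · rw [if_pos hb]; linarith
            · rw [if_neg hb]; exact h b hb
        have hAiff : A ω = a ↔ ∀ b, b ≠ a → g b ω < g a ω := by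
          constructor
          · rintro rfl
            exact fun b hb => hA_strict ω h2 b hb
          · intro h
            by_contra hAa
            have h3 := hA_strict ω h2 a (fun hh => hAa hh.symm)
            have h4 := h (A ω) hAa
            linarith
        simp only [Set.mem_inter_iff, Set.mem_preimage, Set.mem_singleton_iff, Set.mem_Iic,
          Set.mem_setOf_eq]
        rw [hAiff]
        have : (U a ω) ^ (1 / p a) = g a ω := rfl
        rw [this, hWiff]
        tauto
      -- joint law computation
      set K : Set (ℝ × ℝ) := {q : ℝ × ℝ | q.1 ≤ x ∧ q.2 < q.1 ^ (1 / p a)} with hK_def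
      have hK_meas : MeasurableSet K :=
        (measurable_fst measurableSet_Iic).inter
          (measurableSet_lt measurable_snd
            ((Real.continuous_rpow_const (one_div_nonneg.2 (hp_pos a).le)).measurable.comp
              measurable_fst))
      have hprod : μ {ω | U a ω ≤ x ∧ W ω < (U a ω) ^ (1 / p a)}
          = ((μ.map (U a)).prod (μ.map W)) K := by
        have h1 : {ω | U a ω ≤ x ∧ W ω < (U a ω) ^ (1 / p a)}
            = (fun ω => (U a ω, W ω)) ⁻¹' K := rfl
        rw [h1, ← Measure.map_apply ((hU_meas a).prodMk hW_meas) hK_meas,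
          (indepFun_iff_map_prod_eq_prod_map_map (hU_meas a).aemeasurable
            hW_meas.aemeasurable).1 hInd]
      have hslice_empty : ∀ v : ℝ, ¬ (v ≤ x) → Prod.mk v ⁻¹' K = ∅ := by
        intro v hv; ext w; simp [hK_def, hv]
      have hslice : ∀ v : ℝ, v ≤ x → Prod.mk v ⁻¹' K = Set.Iio (v ^ (1 / p a)) := by
        intro v hv; ext w; simp [hK_def, hv]
      have hr : (0:ℝ) ≤ (1 / p a) * (1 - p a) :=
        mul_nonneg (one_div_nonneg.2 (hp_pos a).le) (by linarith [hpa1 a])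
      have hrr : (-1:ℝ) < (1 / p a) * (1 - p a) := lt_of_lt_of_le (by norm_num) hr
      have hpart2 : ∫⁻ v in Set.Ioc x 1, (μ.map W) (Prod.mk v ⁻¹' K) ∂volume = 0 := by
        have h6 : ∀ v ∈ Set.Ioc x 1, (μ.map W) (Prod.mk v ⁻¹' K) = 0 := by
          intro v hv
          rw [hslice_empty v (not_le.2 hv.1)]
          simp
        rw [setLIntegral_congr_fun measurableSet_Ioc h6, lintegral_zero]
      have hpart1 : ∫⁻ v in Set.Ioc (0:ℝ) x, (μ.map W) (Prod.mk v ⁻¹' K) ∂volume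
          = ENNReal.ofReal (p a * x ^ (1 / p a)) := by
        have h7 : ∀ v ∈ Set.Ioc (0:ℝ) x, (μ.map W) (Prod.mk v ⁻¹' K)
            = ENNReal.ofReal (v ^ ((1 / p a) * (1 - p a))) := by
          intro v hv
          rw [hslice v hv.2, Measure.map_apply hW_meas measurableSet_Iio]
          have hv1 : v ^ (1 / p a) ∈ Set.Ioc (0:ℝ) 1 :=
            ⟨Real.rpow_pos_of_pos hv.1 _,
             Real.rpow_le_one hv.1.le (le_trans hv.2 hx.2) (one_div_nonneg.2 (hp_pos a).le)⟩
          have h8 : W ⁻¹' Set.Iio (v ^ (1 / p a)) = {ω | W ω < v ^ (1 / p a)} := rfl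
          rw [h8, hWlaw _ hv1, ← Real.rpow_mul hv.1.le]
        rw [setLIntegral_congr_fun measurableSet_Ioc h7]
        have hInt : IntegrableOn (fun v : ℝ => v ^ ((1 / p a) * (1 - p a)))
            (Set.Ioc 0 x) volume :=
          (intervalIntegrable_iff_integrableOn_Ioc_of_le hx.1).1
            (intervalIntegral.intervalIntegrable_rpow' hrr)
        rw [← ofReal_integral_eq_lintegral_ofReal hInt
          (ae_restrict_of_forall_mem measurableSet_Ioc
            (fun v hv => Real.rpow_nonneg hv.1.le _))]
        congr 1
        rw [← intervalIntegral.integral_of_le hx.1, integral_rpow (Or.inl hrr)]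
        have he : (1 / p a) * (1 - p a) + 1 = 1 / p a := by
          rw [mul_comm, mul_one_div, div_add_one (hp_pos a).ne', sub_add_cancel]
        rw [he, Real.zero_rpow (one_div_pos.2 (hp_pos a)).ne', sub_zero,
          div_eq_iff (one_div_pos.2 (hp_pos a)).ne', mul_comm (p a), mul_assoc,
          mul_one_div, div_self (hp_pos a).ne', mul_one]
      calc μ (A ⁻¹' {a} ∩ U a ⁻¹' Set.Iic x)
          = μ {ω | U a ω ≤ x ∧ W ω < (U a ω) ^ (1 / p a)} := measure_congr hAE
        _ = ((μ.map (U a)).prod (μ.map W)) K := hprod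
        _ = ∫⁻ v, (μ.map W) (Prod.mk v ⁻¹' K) ∂(μ.map (U a)) := Measure.prod_apply hK_meas
        _ = ∫⁻ v in Set.Icc (0:ℝ) 1, (μ.map W) (Prod.mk v ⁻¹' K) ∂volume := by
            rw [hU_unif a]
        _ = ∫⁻ v in Set.Ioc (0:ℝ) 1, (μ.map W) (Prod.mk v ⁻¹' K) ∂volume :=
            (setLIntegral_congr MeasureTheory.Ioc_ae_eq_Icc).symm
        _ = (∫⁻ v in Set.Ioc (0:ℝ) x, (μ.map W) (Prod.mk v ⁻¹' K) ∂volume)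
            + ∫⁻ v in Set.Ioc x 1, (μ.map W) (Prod.mk v ⁻¹' K) ∂volume := by
            rw [← lintegral_union measurableSet_Ioc (Set.Ioc_disjoint_Ioc_of_le le_rfl),
              Set.Ioc_union_Ioc_eq_Ioc hx.1 hx.2]
        _ = ENNReal.ofReal (p a * x ^ (1 / p a)) := by rw [hpart1, hpart2, add_zero]
    have hsplit : {ω | U (A ω) ω ≤ x} = ⋃ a, (A ⁻¹' {a} ∩ U a ⁻¹' Set.Iic x) := by
      ext ω
      simp only [Set.mem_setOf_eq, Set.mem_iUnion, Set.mem_inter_iff, Set.mem_preimage,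
        Set.mem_singleton_iff, Set.mem_Iic]
      constructor
      · intro h; exact ⟨A ω, rfl, h⟩
      · rintro ⟨a, rfl, h⟩; exact h
    rw [hsplit, measure_iUnion ?_ ?_, tsum_fintype]
    · rw [Finset.sum_congr rfl fun a _ => key a,
        ← ENNReal.ofReal_sum_of_nonneg fun a _ =>
          mul_nonneg (hp_pos a).le (Real.rpow_nonneg hx.1 _)]
    · intro a b hab
      refine Set.disjoint_left.2 fun ω hωa hωb => ?_
      exact hab (hωa.1.symm.trans hωb.1)
    · intro a
      exact ((hA_meas (MeasurableSet.singleton a))).inter ((hU_meas a) measurableSet_Iic)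
end

section
/- For every ε ∈ (0,1/4) and every q ∈ (0,1/2], δ_ε(q) ≥ q/5. -/
/-!
With `g x = max (1 - x) ε ^ (-1/2)` nondecreasing, the substitution `u = x ^ (1/(2q))` together
with `x ^ (1/(2q)) ≤ x` gives `∫₀¹ x^(1/q-1) g x ≥ 2q ∫₀¹ u g u = q (8/3 - 2√ε + √ε³/3)`.
Hence `δ_ε(q) ≥ q (2/3 - √ε + √ε³/3)`, which is at least `q/5` as long as `√ε < 1/2`.
-/

/-- `δ_ε(q) = ∫₀¹ x^(1/q−1) · min((1−x)^(−1/2), ε^(−1/2)) dx − q(2−√ε)`. -/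
noncomputable def deltaEps (ε q : ℝ) : ℝ :=
  (∫ x in (0:ℝ)..1, x ^ (1 / q - 1) * min ((1 - x) ^ (-(1:ℝ)/2)) (ε ^ (-(1:ℝ)/2)))
    - q * (2 - Real.sqrt ε)

open Set Real intervalIntegral

theorem min_rpow_eq_max_rpow_of_nonpos {a b y : ℝ} (ha : 0 < a) (hb : 0 < b) (hy : y ≤ 0) :
    min (a ^ y) (b ^ y) = max a b ^ y := by
  rcases le_total a b with hab | hab
  · rw [max_eq_right hab, min_eq_right (rpow_le_rpow_of_nonpos ha hab hy)]
  · rw [max_eq_left hab, min_eq_left (rpow_le_rpow_of_nonpos hb hab hy)]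

/-- The two integrands differ only at `x = 1`, where `(1 - x) ^ (-1/2)` is the junk value `0`. -/
theorem deltaEps_eq_integral_max {ε : ℝ} (q : ℝ) (hε : 0 < ε) :
    deltaEps ε q =
      (∫ x in (0:ℝ)..1, x ^ (1 / q - 1) * max (1 - x) ε ^ (-(1:ℝ)/2)) - q * (2 - √ε) := by
  rw [deltaEps, integral_congr_ae]
  filter_upwards [MeasureTheory.Measure.ae_ne MeasureTheory.volume (1:ℝ)] with x hx1 hx
  rw [uIoc_of_le zero_le_one] at hx
  rw [min_rpow_eq_max_rpow_of_nonpos (by linarith [lt_of_le_of_ne hx.2 hx1]) hε (by norm_num)]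

/-- `p x^(p-1) dx` on `[0,1]` is the law of `U^(1/p)`, which increases with `p`; concretely,
substitute `u = x^(p/a)` and use `x^(p/a) ≤ x`. -/
theorem mul_integral_rpow_sub_one_mul_le {g : ℝ → ℝ} {a p : ℝ} (ha : 1 ≤ a) (hap : a ≤ p)
    (hg : MonotoneOn g (Icc 0 1)) (hgc : ContinuousOn g (Icc 0 1)) :
    a * ∫ x in (0:ℝ)..1, x ^ (a - 1) * g x ≤ p * ∫ x in (0:ℝ)..1, x ^ (p - 1) * g x := by
  set r := p / a with hr
  have hr1 : 1 ≤ r := by rw [hr, le_div_iff₀ (by linarith)]; linarith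
  have hmaps : MapsTo (fun x : ℝ => x ^ r) (Icc 0 1) (Icc 0 1) := fun x hx =>
    ⟨rpow_nonneg hx.1 r, rpow_le_one hx.1 hx.2 (by linarith)⟩
  have hsubst : ∫ x in (0:ℝ)..1, x ^ (a - 1) * g x
      = ∫ x in (0:ℝ)..1, r * (x ^ (p - 1) * g (x ^ r)) := by
    have := integral_comp_mul_deriv' (a := 0) (b := 1) (f := fun x : ℝ => x ^ r)
      (f' := fun x => r * x ^ (r - 1)) (g := fun u => u ^ (a - 1) * g u)
      (fun x _ => by simpa [mul_comm] using hasDerivAt_rpow_const (p := r) (Or.inr hr1))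
      (continuousOn_const.mul (continuousOn_id.rpow_const fun _ _ => Or.inr (by linarith)))
      (by
        rw [uIcc_of_le zero_le_one]
        refine ContinuousOn.mul ?_ (hgc.mono hmaps.image_subset)
        exact continuousOn_id.rpow_const fun _ _ => Or.inr (by linarith))
    rw [zero_rpow (by positivity), one_rpow] at this
    rw [← this]
    refine integral_congr fun x hx => ?_
    rw [uIcc_of_le zero_le_one] at hx
    have hexp : x ^ (p - 1) = (x ^ r) ^ (a - 1) * x ^ (r - 1) := by
      rw [← rpow_mul hx.1, ← rpow_add_of_nonneg hx.1 (by nlinarith) (by linarith)]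
      congr 1
      rw [hr]; field_simp; ring
    simp only [Function.comp, hexp]
    ring
  have hcont : ContinuousOn (fun x : ℝ => x ^ (p - 1)) (Icc 0 1) :=
    continuousOn_id.rpow_const fun _ _ => Or.inr (by linarith)
  have hgr : ContinuousOn (fun x : ℝ => g (x ^ r)) (Icc 0 1) :=
    hgc.comp (continuousOn_id.rpow_const fun _ _ => Or.inr (by linarith)) hmaps
  rw [hsubst, integral_const_mul, ← mul_assoc, hr, mul_div_cancel₀ _ (by positivity : a ≠ 0)]
  refine mul_le_mul_of_nonneg_left (integral_mono_on zero_le_one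
    ((hcont.mul hgr).intervalIntegrable_of_Icc zero_le_one)
    ((hcont.mul hgc).intervalIntegrable_of_Icc zero_le_one) fun x hx => ?_) (by linarith)
  exact mul_le_mul_of_nonneg_left (hg (hmaps hx) hx (rpow_le_self_of_le_one hx.1 hx.2 hr1))
    (rpow_nonneg hx.1 _)

theorem integral_mul_max_one_sub_rpow {ε : ℝ} (hε0 : 0 < ε) (hε1 : ε ≤ 1) :
    ∫ x in (0:ℝ)..1, x * max (1 - x) ε ^ (-(1:ℝ)/2) = 4/3 - √ε + √ε ^ 3 / 6 := by
  set k : ℝ → ℝ := fun v => (1 - v) * max v ε ^ (-(1:ℝ)/2)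
  have hk : Continuous k := continuous_const.sub continuous_id |>.mul <|
    (continuous_id.max continuous_const).rpow_const fun v => Or.inl (by positivity)
  have hflip : ∫ x in (0:ℝ)..1, x * max (1 - x) ε ^ (-(1:ℝ)/2) = ∫ v in (0:ℝ)..1, k v := by
    simpa [k] using integral_comp_sub_left k (1:ℝ) (a := 0) (b := 1)
  have hlow : ∫ v in (0:ℝ)..ε, k v = ε ^ (-(1:ℝ)/2) * (ε - ε ^ 2 / 2) := by
    rw [integral_congr (g := fun v => ε ^ (-(1:ℝ)/2) * (1 - v)) fun v hv => ?_]
    · rw [integral_const_mul, integral_sub intervalIntegrable_const intervalIntegrable_id,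
        integral_const, integral_id]
      simp only [smul_eq_mul]; ring
    · rw [uIcc_of_le hε0.le] at hv
      simp only [k, max_eq_right hv.2]; ring
  have hhigh : ∫ v in ε..1, k v
      = (1 - ε ^ ((1:ℝ)/2)) / (1/2) - (1 - ε ^ ((3:ℝ)/2)) / (3/2) := by
    rw [integral_congr (g := fun v => v ^ (-(1:ℝ)/2) - v ^ ((1:ℝ)/2)) fun v hv => ?_]
    · rw [integral_sub (intervalIntegrable_rpow' (by norm_num))
        (intervalIntegrable_rpow' (by norm_num)), integral_rpow (Or.inl (by norm_num)),
        integral_rpow (Or.inl (by norm_num))]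
      norm_num
    · rw [uIcc_of_le hε1] at hv
      have hv0 : 0 < v := hε0.trans_le hv.1
      have : v ^ ((1:ℝ)/2) = v * v ^ (-(1:ℝ)/2) := by
        rw [← rpow_one_add' hv0.le (by norm_num)]; norm_num
      simp only [k, max_eq_left hv.1, this]; ring
  rw [hflip, ← integral_add_adjacent_intervals (hk.intervalIntegrable 0 ε)
    (hk.intervalIntegrable ε 1), hlow, hhigh]
  have hs : ε ^ ((1:ℝ)/2) = √ε := (sqrt_eq_rpow ε).symm
  have hneg : ε ^ (-(1:ℝ)/2) = (√ε)⁻¹ := by rw [neg_div, rpow_neg hε0.le, hs]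
  have h32 : ε ^ ((3:ℝ)/2) = ε * √ε := by
    rw [← hs, ← rpow_one_add' hε0.le (by norm_num)]; norm_num
  have hsq : √ε ^ 2 = ε := sq_sqrt hε0.le
  have hpos : 0 < √ε := sqrt_pos.2 hε0
  rw [hs, hneg, h32]
  set s := √ε
  rw [← hsq]
  field_simp
  ring

/-- For every `ε ∈ (0,1/4)` and every `q ∈ (0,1/2]`, `δ_ε(q) ≥ q/5`. -/
theorem deltaEps_ge_q_div_five (ε q : ℝ) (hε : ε ∈ Set.Ioo (0:ℝ) (1/4))
    (hq : q ∈ Set.Ioc (0:ℝ) (1/2)) :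
    deltaEps ε q ≥ q / 5 := by
  obtain ⟨hε0, hε4⟩ := hε
  obtain ⟨hq0, hq2⟩ := hq
  rw [deltaEps_eq_integral_max q hε0, ge_iff_le]
  have hg : Monotone fun x : ℝ => max (1 - x) ε ^ (-(1:ℝ)/2) := fun x y hxy =>
    rpow_le_rpow_of_nonpos (by positivity) (max_le_max (by linarith) le_rfl) (by norm_num)
  have hgc : Continuous fun x : ℝ => max (1 - x) ε ^ (-(1:ℝ)/2) :=
    (continuous_const.sub continuous_id).max continuous_const |>.rpow_const
      fun _ => Or.inl (by positivity)
  have hcomp := mul_integral_rpow_sub_one_mul_le one_le_two (by rw [le_div_iff₀ hq0]; linarith)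
    (hg.monotoneOn _) hgc.continuousOn (p := 1 / q)
  simp only [show (2:ℝ) - 1 = 1 by norm_num, rpow_one] at hcomp
  rw [integral_mul_max_one_sub_rpow hε0 (by linarith)] at hcomp
  have hs : √ε < 1/2 := by rw [sqrt_lt' (by norm_num)]; linarith
  have hpoly : 1/5 ≤ 2/3 - √ε + √ε ^ 3 / 3 := by
    nlinarith [mul_nonneg (by linarith : 0 ≤ 1/2 - √ε) (by nlinarith : 0 ≤ 3 - (ε + √ε/2 + 1/4)),
      sq_sqrt hε0.le]
  rw [one_div_mul_eq_div, le_div_iff₀ hq0] at hcomp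
  nlinarith [mul_le_mul_of_nonneg_left hpoly hq0.le]
end

section
/- Let Σ = {1,…,d}, let p be a probability vector on Σ, let ε > 0, and suppose a ∈ Σ satisfies p(a) > 1/2. Then √(p(a)(1−p(a))) ≤ Σ_{b∈Σ, b≠a} min(√(p(b)), p(b)/√ε) + √ε/4. -/
/-!
`√(p a (1 - p a)) ≤ √(1 - p a)`, and `1 - p a` is the mass outside `a`. With `c = √ε`, AM-GM gives
`√x ≤ min (√x) (x / c) + c / 4`, and `x ↦ min (√x) (x / c)` is concave on `[0, ∞)` and vanishes
at `0`, hence subadditive, so its value at `1 - p a` is at most the sum of its values at `p b`,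
`b ≠ a`.
-/

open Set Finset

theorem ConcaveOn.map_add_le {f : ℝ → ℝ} (hf : ConcaveOn ℝ (Ici 0) f) (h0 : 0 ≤ f 0)
    {x y : ℝ} (hx : 0 ≤ x) (hy : 0 ≤ y) : f (x + y) ≤ f x + f y := by
  have scale_le : ∀ {t : ℝ}, 0 ≤ t → t ≤ 1 → t * f (x + y) ≤ f (t * (x + y)) := by
    intro t ht0 ht1
    have h := hf.2 (mem_Ici.2 (add_nonneg hx hy)) self_mem_Ici ht0 (sub_nonneg.2 ht1)
      (add_sub_cancel t 1)
    simp only [smul_eq_mul, mul_zero, add_zero] at h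
    nlinarith
  rcases (add_nonneg hx hy).eq_or_lt with hxy | hxy
  · obtain ⟨rfl, rfl⟩ : x = 0 ∧ y = 0 := ⟨by linarith, by linarith⟩
    simpa using h0
  · have hx' := scale_le (div_nonneg hx hxy.le) (div_le_one_of_le₀ (by linarith) hxy.le)
    have hy' := scale_le (div_nonneg hy hxy.le) (div_le_one_of_le₀ (by linarith) hxy.le)
    rw [div_mul_cancel₀ _ hxy.ne'] at hx' hy'
    calc f (x + y) = (x / (x + y) + y / (x + y)) * f (x + y) := by
          rw [← add_div, div_self hxy.ne', one_mul]
      _ ≤ f x + f y := by linarith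

theorem concaveOn_min_sqrt_div (c : ℝ) :
    ConcaveOn ℝ (Ici 0) (fun x : ℝ ↦ min (√x) (x / c)) :=
  Real.strictConcaveOn_sqrt.concaveOn.inf ((LinearMap.mulRight ℝ c⁻¹).concaveOn (convex_Ici 0))

theorem min_sqrt_div_sum_le {ι : Type*} (c : ℝ) (s : Finset ι) {g : ι → ℝ}
    (hg : ∀ i ∈ s, 0 ≤ g i) :
    min (√(∑ i ∈ s, g i)) ((∑ i ∈ s, g i) / c) ≤ ∑ i ∈ s, min (√(g i)) (g i / c) :=
  Finset.le_sum_of_subadditive_on_pred (fun x : ℝ ↦ min (√x) (x / c)) (0 ≤ ·) (by simp)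
    (fun _ _ ↦ (concaveOn_min_sqrt_div c).map_add_le (by simp)) (fun _ _ ↦ add_nonneg) g hg

/-- AM-GM: `√x ≤ x / c + c / 4`. -/
theorem Real.sqrt_le_min_sqrt_div_add {c x : ℝ} (hc : 0 < c) (hx : 0 ≤ x) :
    √x ≤ min (√x) (x / c) + c / 4 := by
  rcases le_total (√x) (x / c) with h | h
  · rw [min_eq_left h]; linarith
  · rw [min_eq_right h, div_add_div _ _ hc.ne' four_ne_zero, le_div_iff₀ (by positivity)]
    nlinarith [sq_nonneg (√x - c / 2), Real.sq_sqrt hx]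

theorem Real.sqrt_mul_one_sub_le (x : ℝ) : √(x * (1 - x)) ≤ √(1 - x) :=
  Real.sqrt_le_sqrt (by nlinarith [sq_nonneg (1 - x)])

open Finset in
theorem sqrt_p_one_sub_p_le_general {d : ℕ} (p : Fin d → ℝ)
    (hp_nonneg : ∀ b, 0 ≤ p b) (hp_sum : ∑ b, p b = 1)
    (ε : ℝ) (hε : 0 < ε) (a : Fin d) :
    Real.sqrt (p a * (1 - p a)) ≤
      (∑ b ∈ univ \ {a}, min (Real.sqrt (p b)) (p b / Real.sqrt ε))
        + Real.sqrt ε / 4 := by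
  have hrest : ∑ b ∈ univ \ {a}, p b = 1 - p a := by
    rw [Finset.sum_sdiff_eq_sub (subset_univ _), hp_sum, sum_singleton]
  calc √(p a * (1 - p a)) ≤ √(∑ b ∈ univ \ {a}, p b) := hrest ▸ Real.sqrt_mul_one_sub_le (p a)
    _ ≤ min (√(∑ b ∈ univ \ {a}, p b)) ((∑ b ∈ univ \ {a}, p b) / √ε) + √ε / 4 :=
        Real.sqrt_le_min_sqrt_div_add (Real.sqrt_pos.2 hε) (sum_nonneg fun b _ ↦ hp_nonneg b)
    _ ≤ _ := by
        gcongr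
        exact min_sqrt_div_sum_le _ _ fun b _ ↦ hp_nonneg b

open Finset in
/-- If `p` is a probability vector on `Fin d`, `ε > 0` and `p a > 1/2`, then
`√(p(a)(1−p(a))) ≤ ∑_{b ≠ a} min(√(p b), p b / √ε) + √ε / 4`. -/
theorem sqrt_p_one_sub_p_le {d : ℕ} (p : Fin d → ℝ)
    (hp_nonneg : ∀ b, 0 ≤ p b) (hp_sum : ∑ b, p b = 1)
    (ε : ℝ) (hε : 0 < ε) (a : Fin d) (ha : 1/2 < p a) :
    Real.sqrt (p a * (1 - p a)) ≤
      (∑ b ∈ univ \ {a}, min (Real.sqrt (p b)) (p b / Real.sqrt ε))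
        + Real.sqrt ε / 4 :=
  sqrt_p_one_sub_p_le_general p hp_nonneg hp_sum ε hε a
end

section
/- Let Σ = {1,…,d}, let p : Σ* → Δ(Σ) be a language model (a map from finite token sequences to probability vectors on Σ), let κ be a valid selection kernel, let n ≥ 1 and δ ∈ (0,1/4). Let ℙ₀ be the law of (U_1,A_1,…,U_n,A_n) where (U_t)_{t=1}^n are i.i.d. uniform on [0,1], independent of (A_t)_{t=1}^n, and A_t has conditional law p(·|A_1,…,A_{t−1}); let ℙ₁ be the law of (U_1,A_1,…,U_n,A_n) where (U_t) are i.i.d. uniform on [0,1] and A_t is sampled from κ(·|U_t, P_t) with P_t = p(·|A_1,…,A_{t−1}). Suppose T is a measurable {0,1}-valued function of (U_1,A_1,…,U_n,A_n) with ℙ₀(T = 0) ≥ 1 − δ and ℙ₁(T = 1) ≥ 1 − δ. Then E_{ℙ₁}[ Σ_{t=1}^n H(P_t) ] ≥ log(1/(4δ)); equivalently, n ≥ log(1/(4δ)) / E[H̄] where H̄ = (1/n) Σ_{t=1}^n H(P_t). -/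
/-!
Write `W = ∏ₜ Pₜ(Aₜ)` for the model probability of the observed tokens and
`K = ∏ₜ κ(Aₜ | Uₜ, Pₜ)` for the selection likelihood. On the rectangles
`{Uₜ ∈ Bₜ, Aₜ = aₜ for all t}` both `∫ W dℙ₁` and `∫ K dℙ₀` equal
`∏ₜ Pₜ(aₜ) · ∏ₜ ∫_{Bₜ} κ(aₜ | u, Pₜ) du` (by the chain rule under `ℙ₁`, and by the
independence of `U` and `A` under `ℙ₀`), so `W dℙ₁ = K dℙ₀` on the σ-algebra of the
observations. As `K ≤ 1`, the region `E = {T = 1}` satisfies `∫_E W dℙ₁ ≤ ℙ₀(E) ≤ δ` and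
`ℙ₁(E) ≥ 1 - δ`; integrating `log x ≤ x - 1` at `x = W (1 - δ) / δ` over `E` gives
`E_{ℙ₁}[-log W] ≥ (1 - δ) log((1 - δ) / δ)`, which is at least `log(1 / (4δ))` because the
binary entropy is at most `log 2`. Finally `E_{ℙ₁}[-log Pₜ(Aₜ)] = E_{ℙ₁}[H(Pₜ)]`: by validity
of `κ`, `Aₜ` given the history has law `Pₜ` under `ℙ₁`.
-/

open MeasureTheory ProbabilityTheory Real Finset

theorem le_one_of_sum_eq_one {β : Type*} [Fintype β] {p : β → ℝ} (h0 : ∀ b, 0 ≤ p b)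
    (h1 : ∑ b, p b = 1) (b : β) : p b ≤ 1 :=
  h1 ▸ single_le_sum (fun b _ => h0 b) (mem_univ b)

theorem log_one_div_four_mul_le {δ : ℝ} (h0 : 0 < δ) (h1 : δ < 1) :
    log (1 / (4 * δ)) ≤ (1 - δ) * log ((1 - δ) / δ) := by
  have hbin : binEntropy δ ≤ log 2 := binEntropy_le_log_two
  have h4 : log 4 = 2 * log 2 := by
    rw [show (4 : ℝ) = 2 ^ 2 by norm_num, log_pow]
    norm_num
  rw [binEntropy, log_inv, log_inv] at hbin
  rw [one_div, log_inv, log_mul (by norm_num) h0.ne', log_div (by linarith) h0.ne', h4]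
  nlinarith [log_pos (by norm_num : (1 : ℝ) < 2)]

theorem le_of_eq_iSup_lt {L : Type*} [CompleteLattice L] {n : ℕ} {F : Fin n → L} {x : L}
    {t : Fin n} (h : x = ⨆ s : Fin n, ⨆ _ : s.val < t.val, F s) {s : Fin n} (hs : s < t) :
    F s ≤ x :=
  (le_iSup₂ (f := fun s (_ : s.val < t.val) => F s) s hs).trans h.ge

theorem measurable_apply_of_measurable_uncurry {α β γ : Type*} [MeasurableSpace α]
    [MeasurableSpace γ] {g : α → γ → β → ℝ} (hg : Measurable fun x : α × γ => g x.1 x.2)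
    (c : γ) (b : β) : Measurable fun u => g u c b :=
  (hg.comp (measurable_id.prodMk measurable_const)).eval

theorem indicator_preimage_singleton_one {Ω β : Type*} [DecidableEq β] (Y : Ω → β) (b : β) :
    (Y ⁻¹' {b}).indicator (1 : Ω → ℝ) = fun ω => if Y ω = b then 1 else 0 := by
  ext ω
  by_cases h : Y ω = b <;> simp [h]

section Measure

variable {Ω : Type*} {m m0 : MeasurableSpace Ω} {μ : Measure Ω}

theorem mul_log_div_le_integral_neg_log [IsFiniteMeasure μ] {W : Ω → ℝ} {E : Set Ω} {δ : ℝ}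
    (hδ0 : 0 < δ) (hδ : δ ≤ 1 / 2) (hW_pos : ∀ᵐ ω ∂μ, 0 < W ω) (hW_le : ∀ ω, W ω ≤ 1)
    (hW_int : Integrable W μ) (hlog_int : Integrable (fun ω => -log (W ω)) μ)
    (hμE : 1 - δ ≤ μ.real E) (hWE : ∫ ω in E, W ω ∂μ ≤ δ) :
    (1 - δ) * log ((1 - δ) / δ) ≤ ∫ ω, -log (W ω) ∂μ := by
  set c := δ / (1 - δ)
  have hc0 : 0 < c := div_pos hδ0 (by linarith)
  have hlogc : log c ≤ 0 := log_nonpos hc0.le (by rw [div_le_one (by linarith)]; linarith)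
  have hpt : ∀ᵐ ω ∂μ, 1 - log c - W ω / c ≤ -log (W ω) := by
    filter_upwards [hW_pos] with ω hω
    have := log_le_sub_one_of_pos (div_pos hω hc0)
    rw [log_div hω.ne' hc0.ne'] at this
    linarith
  calc (1 - δ) * log ((1 - δ) / δ) = (1 - log c) * (1 - δ) - δ / c := by
        rw [show (1 - δ) / δ = c⁻¹ by rw [inv_div], log_inv,
          show δ / c = 1 - δ by rw [div_div_eq_mul_div, mul_div_cancel_left₀ _ hδ0.ne']]
        ring
    _ ≤ (1 - log c) * μ.real E - (∫ ω in E, W ω ∂μ) / c := by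
        gcongr
        linarith
    _ = ∫ ω in E, (1 - log c - W ω / c) ∂μ := by
        rw [integral_sub (integrable_const _) (hW_int.restrict.div_const c), setIntegral_const,
          integral_div, smul_eq_mul]
        ring
    _ ≤ ∫ ω in E, -log (W ω) ∂μ :=
        setIntegral_mono_ae_restrict ((integrable_const _).sub (hW_int.restrict.div_const c))
          hlog_int.restrict (ae_restrict_of_ae hpt)
    _ ≤ ∫ ω, -log (W ω) ∂μ :=
        setIntegral_le_integral hlog_int (by
          filter_upwards [hW_pos] with ω hω using neg_nonneg.2 (log_nonpos hω.le (hW_le ω)))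

theorem measureReal_le_of_ofReal_one_sub_le_compl [IsProbabilityMeasure μ] {s : Set Ω}
    (hs : MeasurableSet s) {δ : ℝ} (h : ENNReal.ofReal (1 - δ) ≤ μ sᶜ) : μ.real s ≤ δ := by
  have := (ENNReal.ofReal_le_iff_le_toReal (measure_ne_top _ _)).1 h
  rw [← measureReal_def, probReal_compl_eq_one_sub hs] at this
  linarith

theorem setIntegral_le_measureReal [IsFiniteMeasure μ] {f : Ω → ℝ} (hf0 : ∀ ω, 0 ≤ f ω)
    (hf1 : ∀ ω, f ω ≤ 1) (s : Set Ω) : ∫ ω in s, f ω ∂μ ≤ μ.real s := by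
  simpa using (le_abs_self _).trans (norm_setIntegral_le_of_norm_le_const (measure_lt_top μ s)
    fun ω _ => (Real.norm_of_nonneg (hf0 ω)).trans_le (hf1 ω))

theorem measureReal_iInter_eq_prod [IsProbabilityMeasure μ] {n : ℕ} (F : Fin n → Set Ω)
    (q : Fin n → ℝ)
    (hstep : ∀ t, μ.real ((⋂ s < t, F s) ∩ F t) = μ.real (⋂ s < t, F s) * q t) :
    μ.real (⋂ t, F t) = ∏ t, q t := by
  suffices h : ∀ k ≤ n, μ.real (⋂ (s : Fin n) (_ : s.val < k), F s) = ∏ s with s.val < k, q s by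
    simpa using h n le_rfl
  intro k hk
  induction k with
  | zero => simp
  | succ k ih =>
    set t : Fin n := ⟨k, hk⟩
    have hsets : ⋂ (s : Fin n) (_ : s.val < k + 1), F s
        = (⋂ (s : Fin n) (_ : s.val < k), F s) ∩ F t := by
      ext ω
      simp only [Set.mem_iInter, Set.mem_inter_iff, Nat.lt_succ_iff_lt_or_eq]
      refine ⟨fun h => ⟨fun s hs => h s (.inl hs), h t (.inr rfl)⟩, fun h s hs => ?_⟩
      rcases hs with hs | hs
      · exact h.1 s hs
      · obtain rfl : s = t := Fin.ext hs
        exact h.2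
    have hfilter : univ.filter (fun s : Fin n => s.val < k + 1)
        = insert t (univ.filter fun s : Fin n => s.val < k) := by
      ext s
      simp only [mem_filter, mem_univ, true_and, mem_insert, Fin.ext_iff, t]
      omega
    have hstep_t : μ.real ((⋂ (s : Fin n) (_ : s.val < k), F s) ∩ F t)
        = μ.real (⋂ (s : Fin n) (_ : s.val < k), F s) * q t := hstep t
    rw [hsets, hstep_t, ih (by omega), hfilter, prod_insert (by simp [t]), mul_comm]

theorem measureReal_inter_eq_setIntegral_of_condExp [IsFiniteMeasure μ] (hm : m ≤ m0)
    {S : Set Ω} (hS : MeasurableSet S) {g : Ω → ℝ} (hg : μ[S.indicator 1 | m] =ᵐ[μ] g)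
    {D : Set Ω} (hD : MeasurableSet[m] D) : μ.real (D ∩ S) = ∫ ω in D, g ω ∂μ := by
  have hS_int : Integrable (S.indicator (1 : Ω → ℝ)) μ := (integrable_const (1 : ℝ)).indicator hS
  rw [← setIntegral_congr_ae (hm D hD) (hg.mono fun ω h _ => h),
    setIntegral_condExp hm hS_int hD, setIntegral_indicator hS]
  simp

theorem measureReal_inter_preimage_inter_eq_mul [IsFiniteMeasure μ] {α : Type*}
    [MeasurableSpace α] (hm : m ≤ m0) {V : Ω → α} (hV : Measurable V)
    (hind : Indep m (MeasurableSpace.comap V ‹_›) μ) {S : Set Ω} (hS : MeasurableSet S)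
    {g : Ω → ℝ} (hg : μ[S.indicator 1 | m ⊔ MeasurableSpace.comap V ‹_›] =ᵐ[μ] g)
    {f : α → ℝ} (hf : Measurable f) {D : Set Ω} (hD : MeasurableSet[m] D)
    (hDg : ∀ ω ∈ D, g ω = f (V ω)) {B : Set α} (hB : MeasurableSet B) :
    μ.real (D ∩ (V ⁻¹' B ∩ S)) = μ.real D * ∫ ω, B.indicator f (V ω) ∂μ := by
  have hDB : MeasurableSet[m ⊔ MeasurableSpace.comap V ‹_›] (D ∩ V ⁻¹' B) :=
    (le_sup_left (b := MeasurableSpace.comap V ‹_›) _ hD).inter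
      (le_sup_right (a := m) _ ⟨B, hB, rfl⟩)
  rw [← Set.inter_assoc,
    measureReal_inter_eq_setIntegral_of_condExp (sup_le hm hV.comap_le) hS hg hDB,
    ← Indep.setIntegral_eq_mul hm hind hV.aemeasurable hD (hf.indicator hB).aestronglyMeasurable,
    ← setIntegral_indicator (hV hB)]
  refine setIntegral_congr_fun (hm D hD) fun ω hω => ?_
  by_cases hωB : V ω ∈ B
  · simp [hωB, hDg ω hω]
  · simp [hωB]

theorem integrable_comp_of_finite [IsFiniteMeasure μ] {γ : Type*} [Finite γ] [MeasurableSpace γ]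
    [MeasurableSingletonClass γ] {Z : Ω → γ} (hZ : Measurable Z) (h : γ → ℝ) :
    Integrable (fun ω => h (Z ω)) μ :=
  Integrable.of_finite.comp_measurable hZ

theorem integral_comp_eq_sum_measureReal [IsFiniteMeasure μ] {γ : Type*} [Fintype γ]
    [MeasurableSpace γ] [MeasurableSingletonClass γ] {Z : Ω → γ} (hZ : Measurable Z)
    (h : γ → ℝ) : ∫ ω, h (Z ω) ∂μ = ∑ z, μ.real (Z ⁻¹' {z}) * h z := by
  rw [← integral_map hZ.aemeasurable (Integrable.of_finite).aestronglyMeasurable,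
    integral_fintype Integrable.of_finite]
  simp [map_measureReal_apply hZ (measurableSet_singleton _)]

section Conditional

variable [IsFiniteMeasure μ] {γ β : Type*} [Fintype γ] [MeasurableSpace γ]
  [MeasurableSingletonClass γ] [Fintype β] [MeasurableSpace β] [MeasurableSingletonClass β]
  {X : Ω → γ} {Y : Ω → β} (p : γ → β → ℝ)

theorem integral_comp_eq_integral_sum_mul (hX : Measurable X) (hY : Measurable Y)
    (hp : ∀ x y, μ.real (X ⁻¹' {x} ∩ Y ⁻¹' {y}) = μ.real (X ⁻¹' {x}) * p x y)
    (g : γ → β → ℝ) :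
    ∫ ω, g (X ω) (Y ω) ∂μ = ∫ ω, ∑ y, p (X ω) y * g (X ω) y ∂μ := by
  rw [integral_comp_eq_sum_measureReal (Z := fun ω => (X ω, Y ω)) (hX.prodMk hY)
      (fun z => g z.1 z.2),
    integral_comp_eq_sum_measureReal hX fun x => ∑ y, p x y * g x y, Fintype.sum_prod_type]
  refine sum_congr rfl fun x _ => ?_
  rw [mul_sum]
  refine sum_congr rfl fun y _ => ?_
  rw [← Set.singleton_prod_singleton, Set.mk_preimage_prod, hp, mul_assoc]

theorem ae_pos_of_measureReal_inter_eq_mul (hX : Measurable X) (hY : Measurable Y)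
    (hp0 : ∀ x y, 0 ≤ p x y)
    (hp : ∀ x y, μ.real (X ⁻¹' {x} ∩ Y ⁻¹' {y}) = μ.real (X ⁻¹' {x}) * p x y) :
    ∀ᵐ ω ∂μ, 0 < p (X ω) (Y ω) := by
  classical
  have hvanish : ∀ x y, p x y * (if p x y = 0 then (1 : ℝ) else 0) = 0 := fun x y => by
    split_ifs with h <;> simp [h]
  have hnull : ∫ ω, (if p (X ω) (Y ω) = 0 then (1 : ℝ) else 0) ∂μ = 0 := by
    rw [integral_comp_eq_integral_sum_mul p hX hY hp fun x y => if p x y = 0 then 1 else 0]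
    simp [hvanish]
  have hint : Integrable (fun ω => if p (X ω) (Y ω) = 0 then (1 : ℝ) else 0) μ :=
    integrable_comp_of_finite (hX.prodMk hY) fun z => if p z.1 z.2 = 0 then 1 else 0
  rw [integral_eq_zero_iff_of_nonneg (fun ω => by positivity) hint] at hnull
  filter_upwards [hnull] with ω hω
  refine (hp0 _ _).lt_of_ne fun h => ?_
  simp [← h] at hω

end Conditional

theorem integral_eq_sum_setIntegral_preimage {γ : Type*} [Fintype γ] [MeasurableSpace γ]
    [MeasurableSingletonClass γ] {X : Ω → γ} (hX : Measurable X) {f : Ω → ℝ}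
    (hf : Integrable f μ) : ∫ ω, f ω ∂μ = ∑ x, ∫ ω in X ⁻¹' {x}, f ω ∂μ := by
  rw [← integral_iUnion_fintype (fun x => hX (measurableSet_singleton x))
      (pairwise_disjoint_fiber X) fun _ => hf.integrableOn, ← Set.preimage_iUnion,
    Set.iUnion_of_singleton, Set.preimage_univ, Measure.restrict_univ]

theorem setIntegral_eq_of_isPiSystem {μ ν : Measure Ω} (hm : m ≤ m0)
    {C : Set (Set Ω)} (hgen : m = MeasurableSpace.generateFrom C) (hC : IsPiSystem C)
    {f g : Ω → ℝ} (hf : Integrable f μ) (hg : Integrable g ν)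
    (huniv : ∫ ω, f ω ∂μ = ∫ ω, g ω ∂ν)
    (hCeq : ∀ s ∈ C, ∫ ω in s, f ω ∂μ = ∫ ω in s, g ω ∂ν) {s : Set Ω}
    (hs : MeasurableSet[m] s) : ∫ ω in s, f ω ∂μ = ∫ ω in s, g ω ∂ν := by
  induction s, hs using MeasurableSpace.induction_on_inter hgen hC with
  | empty => simp
  | basic s hs => exact hCeq s hs
  | compl s hs ih =>
    have h1 := integral_add_compl (hm s hs) hf
    have h2 := integral_add_compl (hm s hs) hg
    linarith
  | iUnion F hdisj hF ih =>
    rw [integral_iUnion (fun i => hm _ (hF i)) hdisj hf.integrableOn,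
      integral_iUnion (fun i => hm _ (hF i)) hdisj hg.integrableOn]
    exact tsum_congr ih

end Measure

section Rectangles

variable {Ω ι α β : Type*}

def rectangle (U : ι → Ω → α) (A : ι → Ω → β) (B : ι → Set α) (a : ι → β) : Set Ω :=
  ⋂ i, U i ⁻¹' B i ∩ A i ⁻¹' {a i}

theorem mem_rectangle {U : ι → Ω → α} {A : ι → Ω → β} {B : ι → Set α} {a : ι → β} {ω : Ω} :
    ω ∈ rectangle U A B a ↔ ∀ i, U i ω ∈ B i ∧ A i ω = a i := by
  simp [rectangle]

variable [MeasurableSpace α]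

def rectangles (U : ι → Ω → α) (A : ι → Ω → β) : Set (Set Ω) :=
  {S | ∃ B : ι → Set α, (∀ i, MeasurableSet (B i)) ∧ ∃ a, rectangle U A B a = S}

variable {U : ι → Ω → α} {A : ι → Ω → β}

theorem isPiSystem_rectangles : IsPiSystem (rectangles U A) := by
  rintro _ ⟨B, hB, a, rfl⟩ _ ⟨B', hB', a', rfl⟩ ⟨ω, hω, hω'⟩
  obtain rfl : a = a' :=
    funext fun i => (mem_rectangle.1 hω i).2.symm.trans (mem_rectangle.1 hω' i).2
  refine ⟨fun i => B i ∩ B' i, fun i => (hB i).inter (hB' i), a, ?_⟩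
  ext ω
  simp only [Set.mem_inter_iff, mem_rectangle]
  exact ⟨fun h => ⟨fun i => ⟨(h i).1.1, (h i).2⟩, fun i => ⟨(h i).1.2, (h i).2⟩⟩,
    fun h i => ⟨⟨(h.1 i).1, (h.2 i).1⟩, (h.1 i).2⟩⟩

variable [MeasurableSpace β] [MeasurableSingletonClass β]

theorem measurableSet_rectangle [MeasurableSpace Ω] [Countable ι] (hU : ∀ i, Measurable (U i))
    (hA : ∀ i, Measurable (A i)) {B : ι → Set α} (hB : ∀ i, MeasurableSet (B i)) (a : ι → β) :
    MeasurableSet (rectangle U A B a) :=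
  .iInter fun i => (hU i (hB i)).inter (hA i (measurableSet_singleton _))

theorem iSup_comap_sup_comap_eq_generateFrom_rectangles [Finite ι] [Finite β] :
    ⨆ i, (MeasurableSpace.comap (U i) ‹_› ⊔ MeasurableSpace.comap (A i) ‹_›)
      = MeasurableSpace.generateFrom (rectangles U A) := by
  classical
  apply le_antisymm
  · refine iSup_le fun i => sup_le ?_ ?_
    · rintro _ ⟨C, hC, rfl⟩
      have hC_update : ∀ j, MeasurableSet (Function.update (fun _ => Set.univ) i C j) := by
        intro j
        by_cases hj : j = i
        · subst hj
          simpa using hC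
        · simp [hj]
      have : U i ⁻¹' C = ⋃ a, rectangle U A (Function.update (fun _ => Set.univ) i C) a := by
        ext ω
        simp only [Set.mem_iUnion, Set.mem_preimage, mem_rectangle]
        refine ⟨fun h => ⟨(A · ω), fun j => ⟨?_, rfl⟩⟩, fun ⟨a, h⟩ => by simpa using (h i).1⟩
        by_cases hj : j = i
        · subst hj
          simpa using h
        · simp [hj]
      rw [this]
      exact .iUnion fun a => .basic _ ⟨_, hC_update, a, rfl⟩
    · rintro _ ⟨C, -, rfl⟩
      have : A i ⁻¹' C = ⋃ (a : ι → β) (_ : a i ∈ C), rectangle U A (fun _ => Set.univ) a := by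
        ext ω
        simp only [Set.mem_iUnion, Set.mem_preimage, mem_rectangle, Set.mem_univ, true_and,
          exists_prop]
        exact ⟨fun h => ⟨(A · ω), h, fun _ => rfl⟩, fun ⟨a, ha, h⟩ => h i ▸ ha⟩
      rw [this]
      exact .iUnion fun a => .iUnion fun _ => .basic _ ⟨_, fun _ => .univ, a, rfl⟩
  · refine MeasurableSpace.generateFrom_le ?_
    rintro _ ⟨B, hB, a, rfl⟩
    have hle := le_iSup fun j =>
      MeasurableSpace.comap (U j) ‹_› ⊔ MeasurableSpace.comap (A j) ‹_›
    refine .iInter fun i => .inter ?_ ?_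
    · exact hle i _ (le_sup_left (b := MeasurableSpace.comap (A i) ‹_›) _
        (comap_measurable (U i) (hB i)))
    · exact hle i _ (le_sup_right (a := MeasurableSpace.comap (U i) ‹_›) _
        (comap_measurable (A i) (measurableSet_singleton _)))

end Rectangles

section Model

variable {Ω α β : Type*} {n : ℕ}

/- Along a path `(u, a)`, `nextLaw LM a t` is the paper's `Pₜ`, `pathProb LM a` is
`∏ₜ Pₜ(aₜ)` and `selectionLik κ LM u a` is `∏ₜ κ(aₜ | uₜ, Pₜ)`. -/
def nextLaw (LM : List β → β → ℝ) (a : Fin n → β) (t : Fin n) : β → ℝ :=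
  LM (List.ofFn (Fin.take t t.isLt.le a))

def pathProb (LM : List β → β → ℝ) (a : Fin n → β) : ℝ :=
  ∏ t, nextLaw LM a t (a t)

def selectionLik (κ : α → (β → ℝ) → β → ℝ) (LM : List β → β → ℝ) (u : Fin n → α)
    (a : Fin n → β) : ℝ :=
  ∏ t, κ (u t) (nextLaw LM a t) (a t)

/-- The discrete form of: under `μ`, the token `A t` given the earlier ones has law `LM` of
that history. -/
def FollowsModel [MeasurableSpace Ω] (μ : Measure Ω) (A : Fin n → Ω → β)
    (LM : List β → β → ℝ) : Prop :=
  ∀ (t : Fin n) (v : Fin t → β) (b : β),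
    μ.real ((fun ω => Fin.take t t.isLt.le (A · ω)) ⁻¹' {v} ∩ A t ⁻¹' {b})
      = μ.real ((fun ω => Fin.take t t.isLt.le (A · ω)) ⁻¹' {v}) * LM (List.ofFn v) b

theorem nextLaw_congr (LM : List β → β → ℝ) {a a' : Fin n → β} {t : Fin n}
    (h : ∀ s < t, a s = a' s) : nextLaw LM a t = nextLaw LM a' t := by
  unfold nextLaw
  congr 2
  ext i
  exact h _ i.isLt

theorem pathProb_le_one [Fintype β] {LM : List β → β → ℝ} (hLM0 : ∀ s b, 0 ≤ LM s b)
    (hLM_sum : ∀ s, ∑ b, LM s b = 1) (a : Fin n → β) : pathProb LM a ≤ 1 :=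
  prod_le_one (fun _ _ => hLM0 _ _) fun _ _ => le_one_of_sum_eq_one (hLM0 _) (hLM_sum _) _

theorem selectionLik_nonneg {κ : α → (β → ℝ) → β → ℝ} (hκ0 : ∀ u p b, 0 ≤ κ u p b)
    (LM : List β → β → ℝ) (u : Fin n → α) (a : Fin n → β) : 0 ≤ selectionLik κ LM u a :=
  prod_nonneg fun _ _ => hκ0 _ _ _

theorem selectionLik_le_one [Fintype β] {κ : α → (β → ℝ) → β → ℝ}
    (hκ0 : ∀ u p b, 0 ≤ κ u p b) (hκ_sum : ∀ u p, ∑ b, κ u p b = 1) (LM : List β → β → ℝ)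
    (u : Fin n → α) (a : Fin n → β) : selectionLik κ LM u a ≤ 1 :=
  prod_le_one (fun _ _ => hκ0 _ _ _) fun _ _ => le_one_of_sum_eq_one (hκ0 _ _) (hκ_sum _ _) _

variable {m0 : MeasurableSpace Ω} [MeasurableSpace β] [MeasurableSingletonClass β]
  {μ μ0 μ1 : Measure Ω} {U : Fin n → Ω → α} {A : Fin n → Ω → β} {LM : List β → β → ℝ}
  {κ : α → (β → ℝ) → β → ℝ}

theorem ae_nextLaw_pos [Fintype β] [IsFiniteMeasure μ] (hA : ∀ t, Measurable (A t))
    (hLM0 : ∀ s b, 0 ≤ LM s b) (hfollows : FollowsModel μ A LM) :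
    ∀ᵐ ω ∂μ, ∀ t, 0 < nextLaw LM (A · ω) t (A t ω) :=
  ae_all_iff.2 fun t => ae_pos_of_measureReal_inter_eq_mul (fun v b => LM (List.ofFn v) b)
    (measurable_pi_lambda _ fun _ => hA _) (hA t) (fun _ _ => hLM0 _ _) (hfollows t)

theorem integral_sum_negMulLog_nextLaw [Fintype β] [IsFiniteMeasure μ]
    (hA : ∀ t, Measurable (A t)) (hLM0 : ∀ s b, 0 ≤ LM s b) (hfollows : FollowsModel μ A LM) :
    ∫ ω, ∑ t, ∑ b, negMulLog (nextLaw LM (A · ω) t b) ∂μ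
      = ∫ ω, -log (pathProb LM (A · ω)) ∂μ := by
  have hprefix : ∀ t : Fin n, Measurable fun ω => Fin.take t t.isLt.le (A · ω) :=
    fun t => measurable_pi_lambda _ fun _ => hA _
  have hlog : (fun ω => -log (pathProb LM (A · ω)))
      =ᵐ[μ] fun ω => ∑ t, -log (nextLaw LM (A · ω) t (A t ω)) := by
    filter_upwards [ae_nextLaw_pos hA hLM0 hfollows] with ω h
    rw [pathProb, log_prod fun t _ => (h t).ne', sum_neg_distrib]
  have hentropy_int : ∀ t, Integrable (fun ω => ∑ b, negMulLog (nextLaw LM (A · ω) t b)) μ :=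
    fun t => integrable_comp_of_finite (hprefix t) fun v => ∑ b, negMulLog (LM (List.ofFn v) b)
  have hlog_int : ∀ t, Integrable (fun ω => -log (nextLaw LM (A · ω) t (A t ω))) μ :=
    fun t => integrable_comp_of_finite ((hprefix t).prodMk (hA t))
      fun x => -log (LM (List.ofFn x.1) x.2)
  rw [integral_congr_ae hlog, integral_finsetSum _ fun t _ => hentropy_int t,
    integral_finsetSum _ fun t _ => hlog_int t]
  refine sum_congr rfl fun t _ => ?_
  refine Eq.trans ?_ (integral_comp_eq_integral_sum_mul _ (hprefix t) (hA t) (hfollows t)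
    fun v b => -log (LM (List.ofFn v) b)).symm
  simp only [negMulLog, neg_mul, mul_neg]
  rfl

theorem log_one_div_four_mul_le_integral_sum_negMulLog [Fintype β] [IsFiniteMeasure μ0]
    [IsFiniteMeasure μ1] (hA : ∀ t, Measurable (A t)) (hLM0 : ∀ s b, 0 ≤ LM s b)
    (hLM_sum : ∀ s, ∑ b, LM s b = 1) (hκ0 : ∀ u p b, 0 ≤ κ u p b)
    (hκ_sum : ∀ u p, ∑ b, κ u p b = 1) (hfollows : FollowsModel μ1 A LM) {E : Set Ω}
    (hE : ∫ ω in E, pathProb LM (A · ω) ∂μ1 = ∫ ω in E, selectionLik κ LM (U · ω) (A · ω) ∂μ0)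
    {δ : ℝ} (hδ0 : 0 < δ) (hδ : δ ≤ 1 / 2) (hμ0E : μ0.real E ≤ δ)
    (hμ1E : 1 - δ ≤ μ1.real E) :
    log (1 / (4 * δ)) ≤ ∫ ω, ∑ t, ∑ b, negMulLog (nextLaw LM (A · ω) t b) ∂μ1 := by
  have hpath : Measurable fun ω t => A t ω := measurable_pi_lambda _ hA
  have hWE : ∫ ω in E, pathProb LM (A · ω) ∂μ1 ≤ δ :=
    hE ▸ (setIntegral_le_measureReal (fun _ => selectionLik_nonneg hκ0 LM _ _)
      (fun _ => selectionLik_le_one hκ0 hκ_sum LM _ _) E).trans hμ0E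
  calc log (1 / (4 * δ)) ≤ (1 - δ) * log ((1 - δ) / δ) :=
        log_one_div_four_mul_le hδ0 (by linarith)
    _ ≤ ∫ ω, -log (pathProb LM (A · ω)) ∂μ1 :=
        mul_log_div_le_integral_neg_log hδ0 hδ
          ((ae_nextLaw_pos hA hLM0 hfollows).mono fun _ h => prod_pos fun t _ => h t)
          (fun _ => pathProb_le_one hLM0 hLM_sum _) (integrable_comp_of_finite hpath _)
          (integrable_comp_of_finite hpath fun a => -log (pathProb LM a)) hμ1E hWE
    _ = _ := (integral_sum_negMulLog_nextLaw hA hLM0 hfollows).symm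

theorem measureReal_path_eq_pathProb [IsProbabilityMeasure μ] [DecidableEq β]
    (past : Fin n → MeasurableSpace Ω) (hpast : ∀ t, past t ≤ m0)
    (hA_past : ∀ s t, s < t → Measurable[past t] (A s)) (hA : ∀ t, Measurable (A t))
    (hcond : ∀ t b, μ[(fun ω => if A t ω = b then (1 : ℝ) else 0) | past t]
      =ᵐ[μ] fun ω => nextLaw LM (A · ω) t b)
    (a : Fin n → β) : μ.real (⋂ t, A t ⁻¹' {a t}) = pathProb LM a := by
  refine measureReal_iInter_eq_prod _ _ fun t => ?_
  have hD : MeasurableSet[past t] (⋂ s < t, A s ⁻¹' {a s}) :=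
    .iInter fun s => .iInter fun hs => hA_past s t hs (measurableSet_singleton _)
  have hcond_t : μ[(A t ⁻¹' {a t}).indicator 1 | past t]
      =ᵐ[μ] fun ω => nextLaw LM (A · ω) t (a t) := by
    rw [indicator_preimage_singleton_one]
    exact hcond t (a t)
  rw [measureReal_inter_eq_setIntegral_of_condExp (hpast t) (hA t (measurableSet_singleton _))
      hcond_t hD,
    setIntegral_congr_fun (hpast t _ hD) (g := fun _ => nextLaw LM a t (a t)) fun ω hω =>
      congrFun (nextLaw_congr LM fun s hs => Set.mem_iInter₂.1 hω s hs) (a t),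
    setIntegral_const, smul_eq_mul]

variable [MeasurableSpace α]

theorem measureReal_rectangle_eq_prod [IsProbabilityMeasure μ] [DecidableEq β]
    (past : Fin n → MeasurableSpace Ω) (hpast : ∀ t, past t ≤ m0)
    (hU_past : ∀ s t, s < t → Measurable[past t] (U s))
    (hA_past : ∀ s t, s < t → Measurable[past t] (A s))
    (hU : ∀ t, Measurable (U t)) (hA : ∀ t, Measurable (A t))
    (hκ : Measurable fun x : α × (β → ℝ) => κ x.1 x.2)
    (hindep : ∀ t, Indep (MeasurableSpace.comap (U t) ‹_›) (past t) μ)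
    (hcond : ∀ t b, μ[(fun ω => if A t ω = b then (1 : ℝ) else 0) |
        past t ⊔ MeasurableSpace.comap (U t) ‹_›]
      =ᵐ[μ] fun ω => κ (U t ω) (nextLaw LM (A · ω) t) b)
    {B : Fin n → Set α} (hB : ∀ t, MeasurableSet (B t)) (a : Fin n → β) :
    μ.real (rectangle U A B a)
      = ∏ t, ∫ ω, (B t).indicator (fun u => κ u (nextLaw LM a t) (a t)) (U t ω) ∂μ := by
  refine measureReal_iInter_eq_prod _ _ fun t => ?_
  have hD : MeasurableSet[past t] (⋂ s < t, U s ⁻¹' B s ∩ A s ⁻¹' {a s}) :=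
    .iInter fun s => .iInter fun hs =>
      (hU_past s t hs (hB s)).inter (hA_past s t hs (measurableSet_singleton _))
  refine measureReal_inter_preimage_inter_eq_mul (hpast t) (hU t) (hindep t).symm
    (hA t (measurableSet_singleton _)) (g := fun ω => κ (U t ω) (nextLaw LM (A · ω) t) (a t))
    (f := fun u => κ u (nextLaw LM a t) (a t)) ?_
    (measurable_apply_of_measurable_uncurry hκ _ _) hD (fun ω hω => ?_) (hB t)
  · rw [indicator_preimage_singleton_one]
    exact hcond t (a t)
  · simp only [Set.mem_iInter, Set.mem_inter_iff, Set.mem_preimage, Set.mem_singleton_iff] at hω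
    rw [nextLaw_congr LM fun s hs => (hω s hs).2]

theorem setIntegral_selectionLik_rectangle (hU : ∀ t, Measurable (U t))
    (hA : ∀ t, Measurable (A t)) (hκ : Measurable fun x : α × (β → ℝ) => κ x.1 x.2)
    (hU_iid : iIndepFun U μ) (hUA : IndepFun (fun ω t => U t ω) (fun ω t => A t ω) μ)
    {B : Fin n → Set α} (hB : ∀ t, MeasurableSet (B t)) (a : Fin n → β) :
    ∫ ω in rectangle U A B a, selectionLik κ LM (U · ω) (A · ω) ∂μ
      = μ.real (⋂ t, A t ⁻¹' {a t})
        * ∏ t, ∫ ω, (B t).indicator (fun u => κ u (nextLaw LM a t) (a t)) (U t ω) ∂μ := by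
  set f : Fin n → α → ℝ := fun t => (B t).indicator fun u => κ u (nextLaw LM a t) (a t)
  set φ : (Fin n → β) → ℝ := ({a} : Set (Fin n → β)).indicator 1
  have hf : ∀ t, Measurable (f t) := fun t =>
    (measurable_apply_of_measurable_uncurry hκ _ _).indicator (hB t)
  have hφ : Measurable φ := measurable_one.indicator (measurableSet_singleton a)
  have hψ : Measurable fun u : Fin n → α => ∏ t, f t (u t) :=
    Finset.measurable_prod _ fun t _ => (hf t).comp (measurable_pi_apply t)
  have hsplit : (rectangle U A B a).indicator (fun ω => selectionLik κ LM (U · ω) (A · ω))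
      = fun ω => φ (A · ω) * ∏ t, f t (U t ω) := by
    ext ω
    by_cases hA_ω : (A · ω) = a
    · by_cases hU_ω : ∀ t, U t ω ∈ B t
      · have hω : ω ∈ rectangle U A B a :=
          mem_rectangle.2 fun t => ⟨hU_ω t, congrFun hA_ω t⟩
        rw [Set.indicator_of_mem hω,
          show φ (A · ω) = 1 from Set.indicator_of_mem (Set.mem_singleton_iff.2 hA_ω) _, one_mul]
        refine prod_congr rfl fun t _ => ?_
        simp only [f, Set.indicator_of_mem (hU_ω t), ← hA_ω]
      · obtain ⟨t, ht⟩ := not_forall.1 hU_ω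
        have hω : ω ∉ rectangle U A B a := fun h => ht (mem_rectangle.1 h t).1
        rw [Set.indicator_of_notMem hω,
          prod_eq_zero (mem_univ t) (Set.indicator_of_notMem ht _), mul_zero]
    · have hω : ω ∉ rectangle U A B a :=
        fun h => hA_ω (funext fun t => (mem_rectangle.1 h t).2)
      simp [φ, hω, hA_ω]
  have hφ_path : (fun ω => φ (A · ω)) = (⋂ t, A t ⁻¹' {a t}).indicator 1 := by
    rw [show ⋂ t, A t ⁻¹' {a t} = (fun ω t => A t ω) ⁻¹' {a} by ext; simp [funext_iff]]
    rfl
  have hind : IndepFun (fun ω => φ (A · ω)) (fun ω => ∏ t, f t (U t ω)) μ := hUA.symm.comp hφ hψ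
  rw [← integral_indicator (measurableSet_rectangle hU hA hB a), hsplit,
    hind.integral_fun_mul_eq_mul_integral
      (hφ.comp (measurable_pi_lambda _ hA)).aestronglyMeasurable
      (hψ.comp (measurable_pi_lambda _ hU)).aestronglyMeasurable,
    iIndepFun.integral_fun_prod_comp hU_iid (fun t => (hU t).aemeasurable)
      fun t => (hf t).aestronglyMeasurable, hφ_path,
    integral_indicator_one (.iInter fun t => hA t (measurableSet_singleton _))]

theorem integrable_selectionLik [Fintype β] [IsFiniteMeasure μ] (hU : ∀ t, Measurable (U t))
    (hA : ∀ t, Measurable (A t)) (hκ : Measurable fun x : α × (β → ℝ) => κ x.1 x.2)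
    (hκ0 : ∀ u p b, 0 ≤ κ u p b) (hκ_sum : ∀ u p, ∑ b, κ u p b = 1) :
    Integrable (fun ω => selectionLik κ LM (U · ω) (A · ω)) μ := by
  refine .of_bound (Finset.measurable_prod _ fun t _ => ?_).aestronglyMeasurable 1
    (ae_of_all _ fun ω => ?_)
  · exact (measurable_from_prod_countable_left
      (f := fun x : α × (Fin n → β) => κ x.1 (nextLaw LM x.2 t) (x.2 t))
      fun a => measurable_apply_of_measurable_uncurry hκ (nextLaw LM a t) (a t)).comp
      ((hU t).prodMk (measurable_pi_lambda _ hA))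
  · rw [Real.norm_eq_abs, abs_of_nonneg (selectionLik_nonneg hκ0 _ _ _)]
    exact selectionLik_le_one hκ0 hκ_sum _ _ _

theorem setIntegral_pathProb_eq_setIntegral_selectionLik [Fintype β] [IsProbabilityMeasure μ0]
    [IsProbabilityMeasure μ1] [DecidableEq β]
    (hU : ∀ t, Measurable (U t)) (hA : ∀ t, Measurable (A t))
    (hκ : Measurable fun x : α × (β → ℝ) => κ x.1 x.2) (hκ0 : ∀ u p b, 0 ≤ κ u p b)
    (hκ_sum : ∀ u p, ∑ b, κ u p b = 1)
    (pastA : Fin n → MeasurableSpace Ω) (hpastA : ∀ t, pastA t ≤ m0)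
    (hA_pastA : ∀ s t, s < t → Measurable[pastA t] (A s))
    (h0A_cond : ∀ t b, μ0[(fun ω => if A t ω = b then (1 : ℝ) else 0) | pastA t]
      =ᵐ[μ0] fun ω => nextLaw LM (A · ω) t b)
    (h0U_iid : iIndepFun U μ0) (h0_indep : IndepFun (fun ω t => U t ω) (fun ω t => A t ω) μ0)
    (past : Fin n → MeasurableSpace Ω) (hpast : ∀ t, past t ≤ m0)
    (hU_past : ∀ s t, s < t → Measurable[past t] (U s))
    (hA_past : ∀ s t, s < t → Measurable[past t] (A s))
    (h1U_indep : ∀ t, Indep (MeasurableSpace.comap (U t) ‹_›) (past t) μ1)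
    (h1A_cond : ∀ t b, μ1[(fun ω => if A t ω = b then (1 : ℝ) else 0) |
        past t ⊔ MeasurableSpace.comap (U t) ‹_›]
      =ᵐ[μ1] fun ω => κ (U t ω) (nextLaw LM (A · ω) t) b)
    (hlaw : ∀ t, μ0.map (U t) = μ1.map (U t)) {S : Set Ω}
    (hS : MeasurableSet[⨆ t, (MeasurableSpace.comap (U t) ‹_› ⊔ MeasurableSpace.comap (A t) ‹_›)]
      S) :
    ∫ ω in S, pathProb LM (A · ω) ∂μ1 = ∫ ω in S, selectionLik κ LM (U · ω) (A · ω) ∂μ0 := by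
  have hpath : Measurable fun ω t => A t ω := measurable_pi_lambda _ hA
  have hW_int : Integrable (fun ω => pathProb LM (A · ω)) μ1 := integrable_comp_of_finite hpath _
  have hK_int := integrable_selectionLik (μ := μ0) (LM := LM) hU hA hκ hκ0 hκ_sum
  have hrect : ∀ B : Fin n → Set α, (∀ t, MeasurableSet (B t)) → ∀ a,
      ∫ ω in rectangle U A B a, pathProb LM (A · ω) ∂μ1
        = ∫ ω in rectangle U A B a, selectionLik κ LM (U · ω) (A · ω) ∂μ0 := by
    intro B hB a
    have hW : ∀ ω ∈ rectangle U A B a, pathProb LM (A · ω) = pathProb LM a :=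
      fun ω hω => congrArg _ (funext fun t => (mem_rectangle.1 hω t).2)
    rw [setIntegral_congr_fun (measurableSet_rectangle hU hA hB a) hW, setIntegral_const,
      smul_eq_mul, measureReal_rectangle_eq_prod past hpast hU_past hA_past hU hA hκ h1U_indep
        h1A_cond hB a,
      setIntegral_selectionLik_rectangle hU hA hκ h0U_iid h0_indep hB a,
      measureReal_path_eq_pathProb pastA hpastA hA_pastA hA h0A_cond a, mul_comm]
    congr 1
    refine prod_congr rfl fun t _ => ?_
    have hf := (measurable_apply_of_measurable_uncurry hκ (nextLaw LM a t) (a t)).indicator (hB t)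
    rw [← integral_map (hU t).aemeasurable hf.aestronglyMeasurable, ← hlaw t,
      integral_map (hU t).aemeasurable hf.aestronglyMeasurable]
  have htotal : ∫ ω, pathProb LM (A · ω) ∂μ1 = ∫ ω, selectionLik κ LM (U · ω) (A · ω) ∂μ0 := by
    rw [integral_eq_sum_setIntegral_preimage hpath hW_int,
      integral_eq_sum_setIntegral_preimage hpath hK_int]
    refine sum_congr rfl fun a _ => ?_
    have hfiber : (fun ω t => A t ω) ⁻¹' {a} = rectangle U A (fun _ => Set.univ) a := by
      ext ω
      simp [mem_rectangle, funext_iff]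
    rw [hfiber]
    exact hrect _ (fun _ => .univ) a
  exact setIntegral_eq_of_isPiSystem (iSup_le fun t => sup_le (hU t).comap_le (hA t).comap_le)
    iSup_comap_sup_comap_eq_generateFrom_rectangles isPiSystem_rectangles hW_int hK_int htotal
    (fun _ ⟨B, hB, a, hBa⟩ => hBa ▸ hrect B hB a) hS

theorem followsModel_of_selection [Fintype β] [IsProbabilityMeasure μ] [DecidableEq β]
    (ν : Measure α) (past : Fin n → MeasurableSpace Ω) (hpast : ∀ t, past t ≤ m0)
    (hA_past : ∀ s t, s < t → Measurable[past t] (A s))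
    (hU : ∀ t, Measurable (U t)) (hA : ∀ t, Measurable (A t))
    (hκ : Measurable fun x : α × (β → ℝ) => κ x.1 x.2)
    (hκ_valid : ∀ p : β → ℝ, (∀ b, 0 ≤ p b) → ∑ b, p b = 1 → ∀ b, ∫ u, κ u p b ∂ν = p b)
    (hLM0 : ∀ s b, 0 ≤ LM s b) (hLM_sum : ∀ s, ∑ b, LM s b = 1)
    (hindep : ∀ t, Indep (MeasurableSpace.comap (U t) ‹_›) (past t) μ)
    (hlaw : ∀ t, μ.map (U t) = ν)
    (hcond : ∀ t b, μ[(fun ω => if A t ω = b then (1 : ℝ) else 0) |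
        past t ⊔ MeasurableSpace.comap (U t) ‹_›]
      =ᵐ[μ] fun ω => κ (U t ω) (nextLaw LM (A · ω) t) b) :
    FollowsModel μ A LM := by
  intro t v b
  have hprefix : Measurable[past t] fun ω => Fin.take t t.isLt.le (A · ω) :=
    @measurable_pi_lambda _ _ _ (past t) _ _ fun i => hA_past _ t i.isLt
  have hf := measurable_apply_of_measurable_uncurry hκ (LM (List.ofFn v)) b
  have hcond_t : μ[(A t ⁻¹' {b}).indicator 1 | past t ⊔ MeasurableSpace.comap (U t) ‹_›]
      =ᵐ[μ] fun ω => κ (U t ω) (nextLaw LM (A · ω) t) b := by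
    rw [indicator_preimage_singleton_one]
    exact hcond t b
  have h := measureReal_inter_preimage_inter_eq_mul (hpast t) (hU t) (hindep t).symm
    (hA t (measurableSet_singleton b)) hcond_t hf (hprefix (measurableSet_singleton v))
    (fun ω (hω : Fin.take t t.isLt.le (A · ω) = v) => by rw [nextLaw, hω]) MeasurableSet.univ
  rwa [Set.preimage_univ, Set.univ_inter, Set.indicator_univ,
    ← integral_map (hU t).aemeasurable hf.aestronglyMeasurable, hlaw t,
    hκ_valid _ (hLM0 _) (hLM_sum _)] at h

end Model

theorem watermark_lower_bound_entropy_general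
    {d n : ℕ} (δ : ℝ) (hδ : δ ∈ Set.Ioo (0:ℝ) (1/4))
    (LM : List (Fin d) → Fin d → ℝ)
    (hLM_nonneg : ∀ s a, 0 ≤ LM s a) (hLM_sum : ∀ s, ∑ a, LM s a = 1)
    (κ : ℝ → (Fin d → ℝ) → Fin d → ℝ)
    (hκ_meas : Measurable fun x : ℝ × (Fin d → ℝ) => κ x.1 x.2)
    (hκ_nonneg : ∀ u p a, 0 ≤ κ u p a) (hκ_sum : ∀ u p, ∑ a, κ u p a = 1)
    (hκ_valid : ∀ p : Fin d → ℝ, (∀ a, 0 ≤ p a) → ∑ a, p a = 1 →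
      ∀ a, (∫ u in (0:ℝ)..1, κ u p a) = p a)
    {Ω : Type*} {m0 : MeasurableSpace Ω}
    (μ0 μ1 : Measure Ω) [IsProbabilityMeasure μ0] [IsProbabilityMeasure μ1]
    (U : Fin n → Ω → ℝ) (A : Fin n → Ω → Fin d)
    (hU_meas : ∀ t, Measurable (U t)) (hA_meas : ∀ t, Measurable (A t))
    -- histories `A_1,…,A_{t−1}`
    (hist : Fin n → Ω → List (Fin d))
    (hhist : ∀ t ω, hist t ω =
      List.ofFn fun s : Fin t.val => A ⟨s.val, s.isLt.trans t.isLt⟩ ω)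
    -- σ-algebras of the past
    (past pastA : Fin n → MeasurableSpace Ω)
    (hpast : ∀ t, past t = ⨆ s : Fin n, ⨆ _ : s.val < t.val,
      (MeasurableSpace.comap (U s) inferInstance ⊔
        MeasurableSpace.comap (A s) inferInstance))
    (hpastA : ∀ t, pastA t = ⨆ s : Fin n, ⨆ _ : s.val < t.val,
      MeasurableSpace.comap (A s) inferInstance)
    -- null hypothesis: (U_t) i.i.d. uniform, independent of (A_t); A_t ∼ LM(hist)
    (h0U_indep : iIndepFun U μ0)
    (h0U_unif : ∀ t, Measure.map (U t) μ0 = volume.restrict (Set.Icc (0:ℝ) 1))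
    (h0_indep : IndepFun (fun ω t => U t ω) (fun ω t => A t ω) μ0)
    (h0A_cond : ∀ t a, (μ0[(fun ω => if A t ω = a then (1:ℝ) else 0) | pastA t])
      =ᵐ[μ0] fun ω => LM (hist t ω) a)
    -- alternative: U_t uniform, independent of the past; A_t ∼ κ(·|U_t, P_t)
    (h1U_unif : ∀ t, Measure.map (U t) μ1 = volume.restrict (Set.Icc (0:ℝ) 1))
    (h1U_indep : ∀ t, Indep (MeasurableSpace.comap (U t) inferInstance) (past t) μ1)
    (h1A_cond : ∀ t a,
      (μ1[(fun ω => if A t ω = a then (1:ℝ) else 0) |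
          past t ⊔ MeasurableSpace.comap (U t) inferInstance])
        =ᵐ[μ1] fun ω => κ (U t ω) (LM (hist t ω)) a)
    -- the test
    (T : Ω → Bool)
    (hT_meas : Measurable[⨆ s : Fin n,
      (MeasurableSpace.comap (U s) inferInstance ⊔
        MeasurableSpace.comap (A s) inferInstance)] T)
    (hT0 : ENNReal.ofReal (1 - δ) ≤ μ0 {ω | T ω = false})
    (hT1 : ENNReal.ofReal (1 - δ) ≤ μ1 {ω | T ω = true}) :
    Real.log (1/(4*δ)) ≤
      ∫ ω, ∑ t, ∑ a, Real.negMulLog (LM (hist t ω) a) ∂μ1 := by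
  obtain rfl : hist = fun (t : Fin n) ω => List.ofFn (Fin.take t t.isLt.le (A · ω)) :=
    funext fun t => funext (hhist t)
  obtain ⟨hδ0, hδ4⟩ := hδ
  have hU_past : ∀ s t, s < t → Measurable[past t] (U s) := fun s t h =>
    .of_comap_le (le_sup_left.trans (le_of_eq_iSup_lt (hpast t) h))
  have hA_past : ∀ s t, s < t → Measurable[past t] (A s) := fun s t h =>
    .of_comap_le (le_sup_right.trans (le_of_eq_iSup_lt (hpast t) h))
  have hpast_le : ∀ t, past t ≤ m0 := fun t =>
    (hpast t).le.trans (iSup₂_le fun s _ => sup_le (hU_meas s).comap_le (hA_meas s).comap_le)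
  have hpastA_le : ∀ t, pastA t ≤ m0 := fun t =>
    (hpastA t).le.trans (iSup₂_le fun s _ => (hA_meas s).comap_le)
  have hE : MeasurableSet {ω | T ω = true} :=
    hT_meas.mono (iSup_le fun s => sup_le (hU_meas s).comap_le (hA_meas s).comap_le) le_rfl
      (measurableSet_singleton true)
  have hfollows := followsModel_of_selection _ past hpast_le hA_past hU_meas hA_meas hκ_meas
    (fun p hp0 hp1 a => by
      rw [integral_Icc_eq_integral_Ioc, ← intervalIntegral.integral_of_le zero_le_one]
      exact hκ_valid p hp0 hp1 a)
    hLM_nonneg hLM_sum h1U_indep h1U_unif h1A_cond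
  exact log_one_div_four_mul_le_integral_sum_negMulLog hA_meas hLM_nonneg hLM_sum hκ_nonneg
    hκ_sum hfollows (setIntegral_pathProb_eq_setIntegral_selectionLik hU_meas hA_meas hκ_meas
      hκ_nonneg hκ_sum pastA hpastA_le (fun s t h => .of_comap_le (le_of_eq_iSup_lt (hpastA t) h))
      h0A_cond h0U_indep h0_indep past hpast_le hU_past hA_past h1U_indep h1A_cond
      (fun t => (h0U_unif t).trans (h1U_unif t).symm) (hT_meas (measurableSet_singleton true)))
    hδ0 (by linarith)
    (measureReal_le_of_ofReal_one_sub_le_compl hE (by simpa [Set.compl_ofPred] using hT0))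
    ((ENNReal.ofReal_le_iff_le_toReal (measure_ne_top _ _)).1 hT1)

/-- Lower bound for any sequential watermarking scheme (model known).
`LM` is the language model, `κ` a valid selection kernel.  Under `μ0` (the
null) the uniform noise `(U_t)` is i.i.d. uniform on `[0,1]` and independent of
`(A_t)`, which evolves according to the model; under `μ1` (the alternative)
`A_t` is sampled from `κ(·|U_t, P_t)` with `P_t = LM(A_1,…,A_{t−1})`.  If a
test `T` of `(U_1,A_1,…,U_n,A_n)` has both error probabilities at most
`δ < 1/4`, then `E_{μ1}[∑_t H(P_t)] ≥ log(1/(4δ))`. -/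
theorem watermark_lower_bound_entropy
    {d n : ℕ} (hd : 0 < d) (hn : 1 ≤ n) (δ : ℝ) (hδ : δ ∈ Set.Ioo (0:ℝ) (1/4))
    (LM : List (Fin d) → Fin d → ℝ)
    (hLM_nonneg : ∀ s a, 0 ≤ LM s a) (hLM_sum : ∀ s, ∑ a, LM s a = 1)
    (κ : ℝ → (Fin d → ℝ) → Fin d → ℝ)
    (hκ_meas : Measurable fun x : ℝ × (Fin d → ℝ) => κ x.1 x.2)
    (hκ_nonneg : ∀ u p a, 0 ≤ κ u p a) (hκ_sum : ∀ u p, ∑ a, κ u p a = 1)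
    (hκ_valid : ∀ p : Fin d → ℝ, (∀ a, 0 ≤ p a) → ∑ a, p a = 1 →
      ∀ a, (∫ u in (0:ℝ)..1, κ u p a) = p a)
    {Ω : Type*} {m0 : MeasurableSpace Ω}
    (μ0 μ1 : Measure Ω) [IsProbabilityMeasure μ0] [IsProbabilityMeasure μ1]
    (U : Fin n → Ω → ℝ) (A : Fin n → Ω → Fin d)
    (hU_meas : ∀ t, Measurable (U t)) (hA_meas : ∀ t, Measurable (A t))
    -- histories `A_1,…,A_{t−1}`
    (hist : Fin n → Ω → List (Fin d))
    (hhist : ∀ t ω, hist t ω =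
      List.ofFn fun s : Fin t.val => A ⟨s.val, s.isLt.trans t.isLt⟩ ω)
    -- σ-algebras of the past
    (past pastA : Fin n → MeasurableSpace Ω)
    (hpast : ∀ t, past t = ⨆ s : Fin n, ⨆ _ : s.val < t.val,
      (MeasurableSpace.comap (U s) inferInstance ⊔
        MeasurableSpace.comap (A s) inferInstance))
    (hpastA : ∀ t, pastA t = ⨆ s : Fin n, ⨆ _ : s.val < t.val,
      MeasurableSpace.comap (A s) inferInstance)
    -- null hypothesis: (U_t) i.i.d. uniform, independent of (A_t); A_t ∼ LM(hist)
    (h0U_indep : iIndepFun U μ0)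
    (h0U_unif : ∀ t, Measure.map (U t) μ0 = volume.restrict (Set.Icc (0:ℝ) 1))
    (h0_indep : IndepFun (fun ω t => U t ω) (fun ω t => A t ω) μ0)
    (h0A_cond : ∀ t a, (μ0[(fun ω => if A t ω = a then (1:ℝ) else 0) | pastA t])
      =ᵐ[μ0] fun ω => LM (hist t ω) a)
    -- alternative: U_t uniform, independent of the past; A_t ∼ κ(·|U_t, P_t)
    (h1U_unif : ∀ t, Measure.map (U t) μ1 = volume.restrict (Set.Icc (0:ℝ) 1))
    (h1U_indep : ∀ t, Indep (MeasurableSpace.comap (U t) inferInstance) (past t) μ1)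
    (h1A_cond : ∀ t a,
      (μ1[(fun ω => if A t ω = a then (1:ℝ) else 0) |
          past t ⊔ MeasurableSpace.comap (U t) inferInstance])
        =ᵐ[μ1] fun ω => κ (U t ω) (LM (hist t ω)) a)
    -- the test
    (T : Ω → Bool)
    (hT_meas : Measurable[⨆ s : Fin n,
      (MeasurableSpace.comap (U s) inferInstance ⊔
        MeasurableSpace.comap (A s) inferInstance)] T)
    (hT0 : ENNReal.ofReal (1 - δ) ≤ μ0 {ω | T ω = false})
    (hT1 : ENNReal.ofReal (1 - δ) ≤ μ1 {ω | T ω = true}) :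
    Real.log (1/(4*δ)) ≤
      ∫ ω, ∑ t, ∑ a, Real.negMulLog (LM (hist t ω) a) ∂μ1 :=
  watermark_lower_bound_entropy_general δ hδ LM hLM_nonneg hLM_sum κ hκ_meas hκ_nonneg hκ_sum
    hκ_valid (m0 := m0) μ0 μ1 U A hU_meas hA_meas hist hhist past pastA hpast hpastA h0U_indep
    h0U_unif h0_indep h0A_cond h1U_unif h1U_indep h1A_cond T hT_meas hT0 hT1
end

section
/- Let Σ = {1,…,d}, let ξ be a symmetric probability measure on Δ(Σ), let κ be a valid selection kernel, and let (U,P,A) have joint law λ ⊗ ξ ⊗ κ, where λ is the uniform distribution on [0,1], P ~ ξ, and A ~ κ(·|U,P). Fix ε ∈ (0,1/2), let E be the event {P(A) > ε}, and assume P(E) ≥ 1/4. For a ∈ Σ, let μ(·|a) denote the conditional law of U given {A = a} ∩ E. Then χ²(μ(·|a), λ) ≤ 16 d² · ( E[ √( P_ε^c(a)(1 − P_ε^c(a)) ) ] )², where the expectation is over P ~ ξ. -/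
open MeasureTheory ProbabilityTheory

/-- The probability measure on `Fin d` with mass function `v`. -/
noncomputable def vecMeasure {d : ℕ} (v : Fin d → ℝ) : Measure (Fin d) :=
  ∑ a, ENNReal.ofReal (v a) • Measure.dirac a

/-- The joint law `λ ⊗ ξ ⊗ κ` of a triple `(U, P, A)` where `U` is uniform on
`[0,1]`, `P ∼ ξ` and `A ∼ κ(·|U,P)`. -/
noncomputable def tripleLaw {d : ℕ} (ξ : Measure (Fin d → ℝ))
    (κ : ℝ → (Fin d → ℝ) → Fin d → ℝ) : Measure ((ℝ × (Fin d → ℝ)) × Fin d) :=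
  ((volume.restrict (Set.Icc (0:ℝ) 1)).prod ξ).bind
    (fun x => (Measure.dirac x).prod (vecMeasure (κ x.1 x.2)))

/-- `p_ε^c(a) = p(a)·1(p(a) > ε)`. -/
noncomputable def pepsC {d : ℕ} (ε : ℝ) (p : Fin d → ℝ) : Fin d → ℝ :=
  fun a => if ε < p a then p a else 0

/-- The chi-squared divergence `χ²(μ,ν) = ∫ (dμ/dν − 1)² dν`. -/
noncomputable def chiSq (μ ν : Measure ℝ) : ℝ :=
  ∫ x, ((μ.rnDeriv ν x).toReal - 1) ^ 2 ∂ν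

/-!
The law of `U` on `{A = a} ∩ E` has density `F(u) = E_ξ[1(P(a) > ε) κ(a|u,P)]` with respect
to `λ`, and validity of `κ` gives it total mass `Z = E[P_ε^c(a)]`. By symmetry of `ξ`, `Z` does
not depend on `a`, so `P(E) = d Z` and `Z ≥ 1/(4d)`; hence
`χ² = ∫ (F - Z)² / Z² ≤ 16 d² ∫ (F - Z)²`. Finally `F - Z = E_ξ[h(·, P)]` with
`h(u, p) = 1(p(a) > ε) (κ(a|u,p) - p(a))`, and Minkowski's integral inequality bounds its
`L²(λ)` norm by `E_ξ ‖h(·, P)‖₂ ≤ E √(P_ε^c(a)(1 - P_ε^c(a)))`, because a `[0,1]`-valued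
function with mean `m` has variance at most `m (1 - m)`.
-/

open Function

section General

variable {α β : Type*} [MeasurableSpace α] [MeasurableSpace β]

theorem integral_mul_le_sqrt_integral_sq_mul_sqrt_integral_sq {μ : Measure α} {f g : α → ℝ}
    (hf : MemLp f 2 μ) (hg : MemLp g 2 μ) :
    ∫ x, f x * g x ∂μ ≤ √(∫ x, f x ^ 2 ∂μ) * √(∫ x, g x ^ 2 ∂μ) := by
  have h2 : ENNReal.ofReal 2 = 2 := by norm_num
  have holder := integral_mul_norm_le_Lp_mul_Lq Real.HolderConjugate.two_two (h2 ▸ hf) (h2 ▸ hg)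
  have norm_rpow_two (h : α → ℝ) : (fun x => ‖h x‖ ^ (2 : ℝ)) = fun x => h x ^ 2 := by
    ext x; norm_cast; exact sq_abs _
  simp only [norm_rpow_two, ← Real.sqrt_eq_rpow] at holder
  refine le_trans (integral_mono (hf.integrable_mul hg) (hf.norm.integrable_mul hg.norm)
    fun x => ?_) holder
  exact (le_abs_self _).trans (abs_mul _ _).le

/-- Minkowski's integral inequality in `L²`, for bounded integrands. -/
theorem integral_sq_integral_le_sq_integral_sqrt {μ : Measure α} {ν : Measure β}
    [IsFiniteMeasure μ] [IsFiniteMeasure ν] {h : α → β → ℝ} (hh : Measurable (uncurry h))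
    {C : ℝ} (hC : ∀ x y, |h x y| ≤ C) :
    ∫ x, (∫ y, h x y ∂ν) ^ 2 ∂μ ≤ (∫ y, √(∫ x, h x y ^ 2 ∂μ) ∂ν) ^ 2 := by
  set N : β → ℝ := fun y => √(∫ x, h x y ^ 2 ∂μ)
  set B := √(C ^ 2 * μ.real Set.univ)
  have memLp_slice (y : β) : MemLp (fun x => h x y) 2 μ :=
    .of_bound (hh.comp measurable_prodMk_right).aestronglyMeasurable C (.of_forall (hC · y))
  have hprod : Measurable fun w : α × β × β => h w.1 w.2.1 * h w.1 w.2.2 :=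
    (hh.comp (measurable_fst.prodMk (measurable_fst.comp measurable_snd))).mul
      (hh.comp (measurable_fst.prodMk (measurable_snd.comp measurable_snd)))
  have hprod_int : Integrable (fun w : α × β × β => h w.1 w.2.1 * h w.1 w.2.2)
      (μ.prod (ν.prod ν)) :=
    .of_bound hprod.aestronglyMeasurable (C * C) (.of_forall fun w => by
      rw [Real.norm_eq_abs, abs_mul]
      exact mul_le_mul (hC _ _) (hC _ _) (abs_nonneg _) ((abs_nonneg _).trans (hC w.1 w.2.1)))
  have hN : Measurable N := (hh.pow_const 2).stronglyMeasurable.integral_prod_left'.measurable.sqrt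
  have hN_le (y : β) : N y ≤ B := by
    refine Real.sqrt_le_sqrt ?_
    rw [mul_comm, ← smul_eq_mul, ← integral_const]
    exact integral_mono (memLp_slice y).integrable_sq (integrable_const _) fun x =>
      sq_le_sq' (abs_le.1 (hC x y)).1 (abs_le.1 (hC x y)).2
  have hNN_int : Integrable (fun w : β × β => N w.1 * N w.2) (ν.prod ν) := by
    refine .of_bound ((hN.comp measurable_fst).mul (hN.comp measurable_snd)).aestronglyMeasurable
      (B * B) (.of_forall fun w => ?_)
    rw [Real.norm_eq_abs, abs_of_nonneg (by positivity)]
    exact mul_le_mul (hN_le _) (hN_le _) (Real.sqrt_nonneg _) (Real.sqrt_nonneg _)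
  calc ∫ x, (∫ y, h x y ∂ν) ^ 2 ∂μ
      = ∫ x, ∫ w, h x w.1 * h x w.2 ∂(ν.prod ν) ∂μ := by simp_rw [sq, integral_prod_mul]
    _ = ∫ w, ∫ x, h x w.1 * h x w.2 ∂μ ∂(ν.prod ν) := integral_integral_swap hprod_int
    _ ≤ ∫ w, N w.1 * N w.2 ∂(ν.prod ν) :=
        integral_mono hprod_int.integral_prod_right hNN_int fun w =>
          integral_mul_le_sqrt_integral_sq_mul_sqrt_integral_sq (memLp_slice w.1) (memLp_slice w.2)
    _ = (∫ y, N y ∂ν) ^ 2 := by rw [integral_prod_mul, sq]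

theorem integral_sub_integral_sq_le_of_mem_Icc_zero_one {μ : Measure α}
    [IsProbabilityMeasure μ] {X : α → ℝ} (hX : AEMeasurable X μ)
    (h01 : ∀ᵐ x ∂μ, X x ∈ Set.Icc 0 1) :
    ∫ x, (X x - μ[X]) ^ 2 ∂μ ≤ μ[X] * (1 - μ[X]) := by
  rw [← variance_eq_integral hX, mul_comm]
  simpa using variance_le_sub_mul_sub h01 hX

theorem integral_mem_Icc_zero_one {μ : Measure α} [IsProbabilityMeasure μ] {f : α → ℝ}
    (hf : AEMeasurable f μ) (h01 : ∀ x, f x ∈ Set.Icc 0 1) : ∫ x, f x ∂μ ∈ Set.Icc 0 1 := by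
  refine ⟨integral_nonneg fun x => (h01 x).1, ?_⟩
  calc ∫ x, f x ∂μ ≤ ∫ _, (1 : ℝ) ∂μ :=
        integral_mono (.of_mem_Icc 0 1 hf (.of_forall h01)) (integrable_const 1) (h01 · |>.2)
    _ = 1 := by simp

end General

theorem chiSq_withDensity_ofReal {ν : Measure ℝ} [SigmaFinite ν] {f : ℝ → ℝ} (hf : Measurable f)
    (hf_nonneg : ∀ x, 0 ≤ f x) :
    chiSq (ν.withDensity fun x => ENNReal.ofReal (f x)) ν = ∫ x, (f x - 1) ^ 2 ∂ν := by
  refine integral_congr_ae ?_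
  filter_upwards [Measure.rnDeriv_withDensity ν hf.ennreal_ofReal] with x hx
  rw [hx, ENNReal.toReal_ofReal (hf_nonneg x)]

instance : IsProbabilityMeasure (volume.restrict (Set.Icc (0:ℝ) 1)) := ⟨by simp⟩

local notation "𝕌" => volume.restrict (Set.Icc (0:ℝ) 1)

structure IsSelectionKernel {d : ℕ} (κ : ℝ → (Fin d → ℝ) → Fin d → ℝ) : Prop where
  measurable : Measurable fun x : ℝ × (Fin d → ℝ) => κ x.1 x.2
  mem_stdSimplex (u : ℝ) (p : Fin d → ℝ) : κ u p ∈ stdSimplex ℝ (Fin d)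
  intervalIntegral_eq (p : Fin d → ℝ) (hp : p ∈ stdSimplex ℝ (Fin d)) (a : Fin d) :
    ∫ u in (0:ℝ)..1, κ u p a = p a

variable {d : ℕ} {ξ : Measure (Fin d → ℝ)} {κ : ℝ → (Fin d → ℝ) → Fin d → ℝ} {ε : ℝ}

theorem stdSimplex_apply_mem_Icc {p : Fin d → ℝ} (hp : p ∈ stdSimplex ℝ (Fin d)) (a : Fin d) :
    p a ∈ Set.Icc 0 1 :=
  ⟨hp.1 a, hp.2 ▸ Finset.single_le_sum (fun b _ => hp.1 b) (Finset.mem_univ a)⟩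

namespace IsSelectionKernel

theorem measurable_apply (hκ : IsSelectionKernel κ) (a : Fin d) :
    Measurable fun x : ℝ × (Fin d → ℝ) => κ x.1 x.2 a :=
  (measurable_pi_apply a).comp hκ.measurable

theorem mem_Icc (hκ : IsSelectionKernel κ) (u : ℝ) (p : Fin d → ℝ) (a : Fin d) :
    κ u p a ∈ Set.Icc 0 1 :=
  stdSimplex_apply_mem_Icc (hκ.mem_stdSimplex u p) a

theorem integral_eq (hκ : IsSelectionKernel κ) {p : Fin d → ℝ} (hp : p ∈ stdSimplex ℝ (Fin d))
    (a : Fin d) : ∫ u, κ u p a ∂𝕌 = p a := by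
  rw [integral_Icc_eq_integral_Ioc, ← intervalIntegral.integral_of_le zero_le_one,
    hκ.intervalIntegral_eq p hp a]

end IsSelectionKernel

theorem vecMeasure_apply (v : Fin d → ℝ) (s : Set (Fin d)) :
    vecMeasure v s = ∑ b, s.indicator (fun b => ENNReal.ofReal (v b)) b := by
  simp [vecMeasure, Set.indicator]

theorem tripleLaw_apply [SFinite ξ] (hκ : Measurable fun x : ℝ × (Fin d → ℝ) => κ x.1 x.2)
    {s : Set ((ℝ × (Fin d → ℝ)) × Fin d)} (hs : MeasurableSet s) :
    tripleLaw ξ κ s =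
      ∫⁻ x, ∑ b, s.indicator (fun y => ENNReal.ofReal (κ y.1.1 y.1.2 y.2)) (x, b) ∂(𝕌).prod ξ := by
  have slice (x : ℝ × (Fin d → ℝ)) {t : Set ((ℝ × (Fin d → ℝ)) × Fin d)} (ht : MeasurableSet t) :
      (Measure.dirac x).prod (vecMeasure (κ x.1 x.2)) t =
        ∑ b, t.indicator (fun y => ENNReal.ofReal (κ y.1.1 y.1.2 y.2)) (x, b) := by
    rw [Measure.dirac_prod, Measure.map_apply measurable_prodMk_left ht, vecMeasure_apply]
    rfl
  rw [tripleLaw, Measure.bind_apply hs]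
  · exact lintegral_congr fun x => slice x hs
  refine (Measure.measurable_of_measurable_coe _ fun t ht => ?_).aemeasurable
  simp_rw [slice _ ht]
  exact Finset.measurable_sum _ fun b _ =>
    (ENNReal.measurable_ofReal.comp ((measurable_pi_apply b).comp hκ)).indicator
      (measurable_prodMk_right ht)

def selEvent (ε : ℝ) (a : Fin d) : Set ((ℝ × (Fin d → ℝ)) × Fin d) :=
  {x | x.2 = a ∧ ε < x.1.2 x.2}

theorem measurableSet_selEvent (ε : ℝ) (a : Fin d) : MeasurableSet (selEvent ε a) := by
  have : selEvent ε a = Prod.snd ⁻¹' {a} ∩ (fun x => x.1.2 a) ⁻¹' Set.Ioi ε := by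
    ext ⟨x, b⟩
    simp only [selEvent, Set.mem_ofPred_eq, Set.mem_inter_iff, Set.mem_preimage,
      Set.mem_singleton_iff, Set.mem_Ioi]
    constructor <;> rintro ⟨rfl, h⟩ <;> exact ⟨rfl, h⟩
  rw [this]
  exact (measurable_snd (measurableSet_singleton a)).inter
    ((measurable_pi_apply a).comp (measurable_snd.comp measurable_fst) measurableSet_Ioi)

theorem setOf_lt_eq_iUnion_selEvent (ε : ℝ) :
    {x : (ℝ × (Fin d → ℝ)) × Fin d | ε < x.1.2 x.2} = ⋃ a, selEvent ε a := by
  ext x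
  simp [selEvent]

/-- `P(A = a, P(A) > ε | U = u, P = p)`. -/
noncomputable def selIntegrand (κ : ℝ → (Fin d → ℝ) → Fin d → ℝ) (ε : ℝ) (a : Fin d)
    (u : ℝ) (p : Fin d → ℝ) : ℝ :=
  if ε < p a then κ u p a else 0

/-- The density of the law of `U` on the event `{A = a, P(A) > ε}`. -/
noncomputable def selDensity (ξ : Measure (Fin d → ℝ)) (κ : ℝ → (Fin d → ℝ) → Fin d → ℝ)
    (ε : ℝ) (a : Fin d) (u : ℝ) : ℝ :=
  ∫ p, selIntegrand κ ε a u p ∂ξ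

theorem measurable_selIntegrand (hκ : IsSelectionKernel κ) (ε : ℝ) (a : Fin d) :
    Measurable (uncurry (selIntegrand κ ε a)) :=
  Measurable.ite ((measurable_pi_apply a).comp measurable_snd measurableSet_Ioi)
    (hκ.measurable_apply a) measurable_const

theorem selIntegrand_mem_Icc (hκ : IsSelectionKernel κ) (ε : ℝ) (a : Fin d) (u : ℝ)
    (p : Fin d → ℝ) : selIntegrand κ ε a u p ∈ Set.Icc 0 1 := by
  unfold selIntegrand
  split_ifs
  exacts [hκ.mem_Icc u p a, ⟨le_rfl, zero_le_one⟩]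

theorem integrable_selIntegrand [IsFiniteMeasure ξ] (hκ : IsSelectionKernel κ) (ε : ℝ)
    (a : Fin d) (u : ℝ) : Integrable (selIntegrand κ ε a u) ξ :=
  .of_mem_Icc 0 1 ((measurable_selIntegrand hκ ε a).comp measurable_prodMk_left).aemeasurable
    (.of_forall (selIntegrand_mem_Icc hκ ε a u))

theorem measurable_selDensity [SFinite ξ] (hκ : IsSelectionKernel κ) (ε : ℝ) (a : Fin d) :
    Measurable (selDensity ξ κ ε a) :=
  (measurable_selIntegrand hκ ε a).stronglyMeasurable.integral_prod_right'.measurable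

theorem selDensity_mem_Icc [IsProbabilityMeasure ξ] (hκ : IsSelectionKernel κ) (ε : ℝ)
    (a : Fin d) (u : ℝ) : selDensity ξ κ ε a u ∈ Set.Icc 0 1 :=
  integral_mem_Icc_zero_one
    ((measurable_selIntegrand hκ ε a).comp measurable_prodMk_left).aemeasurable
    (selIntegrand_mem_Icc hκ ε a u)

theorem tripleLaw_fst_preimage_inter_selEvent [IsProbabilityMeasure ξ]
    (hκ : IsSelectionKernel κ) (a : Fin d) {t : Set ℝ} (ht : MeasurableSet t) :
    tripleLaw ξ κ ({x | x.1.1 ∈ t} ∩ selEvent ε a) =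
      ∫⁻ u in t, ENNReal.ofReal (selDensity ξ κ ε a u) ∂𝕌 := by
  have hs : MeasurableSet ({x : (ℝ × (Fin d → ℝ)) × Fin d | x.1.1 ∈ t} ∩ selEvent ε a) :=
    (measurable_fst.comp measurable_fst ht).inter (measurableSet_selEvent ε a)
  have sum_eq (x : ℝ × (Fin d → ℝ)) :
      ∑ b, ({x | x.1.1 ∈ t} ∩ selEvent ε a).indicator
        (fun y => ENNReal.ofReal (κ y.1.1 y.1.2 y.2)) (x, b) =
      (t ×ˢ Set.univ).indicator (fun x => ENNReal.ofReal (uncurry (selIntegrand κ ε a) x)) x := by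
    obtain ⟨u, p⟩ := x
    rw [Finset.sum_eq_single a]
    · by_cases hu : u ∈ t <;> by_cases hp : ε < p a <;>
        simp [selEvent, selIntegrand, Set.indicator, hu, hp]
    · intro b _ hb
      simp [selEvent, hb]
    · simp
  have ofReal_selDensity (u : ℝ) : ENNReal.ofReal (selDensity ξ κ ε a u) =
      ∫⁻ p, ENNReal.ofReal (selIntegrand κ ε a u p) ∂ξ :=
    ofReal_integral_eq_lintegral_ofReal (integrable_selIntegrand hκ ε a u)
      (.of_forall fun p => (selIntegrand_mem_Icc hκ ε a u p).1)
  simp_rw [tripleLaw_apply hκ.measurable hs, sum_eq, ofReal_selDensity]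
  rw [lintegral_indicator (ht.prod MeasurableSet.univ), ← Measure.prod_restrict,
    Measure.restrict_univ,
    lintegral_prod _ (measurable_selIntegrand hκ ε a).ennreal_ofReal.aemeasurable]
  rfl

theorem map_fst_restrict_selEvent [IsProbabilityMeasure ξ] (hκ : IsSelectionKernel κ)
    (a : Fin d) :
    ((tripleLaw ξ κ).restrict (selEvent ε a)).map (fun x => x.1.1) =
      (𝕌).withDensity fun u => ENNReal.ofReal (selDensity ξ κ ε a u) := by
  have hU : Measurable fun x : (ℝ × (Fin d → ℝ)) × Fin d => x.1.1 :=
    measurable_fst.comp measurable_fst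
  ext t ht
  rw [Measure.map_apply hU ht, Measure.restrict_apply (hU ht), withDensity_apply _ ht]
  exact tripleLaw_fst_preimage_inter_selEvent hκ a ht

theorem integral_selDensity [IsProbabilityMeasure ξ] (hκ : IsSelectionKernel κ)
    (hξ : ∀ᵐ p ∂ξ, p ∈ stdSimplex ℝ (Fin d)) (ε : ℝ) (a : Fin d) :
    ∫ u, selDensity ξ κ ε a u ∂𝕌 = ∫ p, pepsC ε p a ∂ξ := by
  unfold selDensity
  rw [integral_integral_swap (.of_mem_Icc 0 1 (measurable_selIntegrand hκ ε a).aemeasurable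
    (.of_forall fun x => selIntegrand_mem_Icc hκ ε a x.1 x.2))]
  refine integral_congr_ae ?_
  filter_upwards [hξ] with p hp
  by_cases h : ε < p a <;> simp [h, selIntegrand, pepsC, hκ.integral_eq hp]

theorem tripleLaw_selEvent [IsProbabilityMeasure ξ] (hκ : IsSelectionKernel κ)
    (hξ : ∀ᵐ p ∂ξ, p ∈ stdSimplex ℝ (Fin d)) (a : Fin d) :
    tripleLaw ξ κ (selEvent ε a) = ENNReal.ofReal (∫ p, pepsC ε p a ∂ξ) := by
  have := tripleLaw_fst_preimage_inter_selEvent (ξ := ξ) (ε := ε) hκ a MeasurableSet.univ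
  simp only [Set.mem_univ, Set.ofPred_true, Set.univ_inter, Measure.restrict_univ] at this
  rw [this, ← integral_selDensity hκ hξ, ofReal_integral_eq_lintegral_ofReal]
  · exact .of_mem_Icc 0 1 (measurable_selDensity hκ ε a).aemeasurable
      (.of_forall (selDensity_mem_Icc hκ ε a))
  · exact .of_forall fun u => (selDensity_mem_Icc hκ ε a u).1

theorem measurable_pepsC (ε : ℝ) (a : Fin d) : Measurable fun p : Fin d → ℝ => pepsC ε p a :=
  Measurable.ite (measurable_pi_apply a measurableSet_Ioi) (measurable_pi_apply a)
    measurable_const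

theorem pepsC_mem_Icc {p : Fin d → ℝ} (hp : p ∈ stdSimplex ℝ (Fin d)) (ε : ℝ) (a : Fin d) :
    pepsC ε p a ∈ Set.Icc 0 1 := by
  unfold pepsC
  split_ifs
  exacts [stdSimplex_apply_mem_Icc hp a, ⟨le_rfl, zero_le_one⟩]

theorem integral_pepsC_eq_of_map_comp_perm [IsProbabilityMeasure ξ]
    (hξ_sym : ∀ σ : Equiv.Perm (Fin d), ξ.map (fun p => p ∘ σ) = ξ) (ε : ℝ) (a b : Fin d) :
    ∫ p, pepsC ε p a ∂ξ = ∫ p, pepsC ε p b ∂ξ := by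
  conv_lhs => rw [← hξ_sym (Equiv.swap a b)]
  rw [integral_map (measurable_pi_lambda (fun p : Fin d → ℝ => p ∘ Equiv.swap a b)
    fun c => measurable_pi_apply _).aemeasurable (measurable_pepsC ε a).aestronglyMeasurable]
  simp [pepsC]

theorem tripleLaw_setOf_lt [IsProbabilityMeasure ξ] (hκ : IsSelectionKernel κ)
    (hξ : ∀ᵐ p ∂ξ, p ∈ stdSimplex ℝ (Fin d))
    (hξ_sym : ∀ σ : Equiv.Perm (Fin d), ξ.map (fun p => p ∘ σ) = ξ) (a : Fin d) :
    tripleLaw ξ κ {x | ε < x.1.2 x.2} = d * ENNReal.ofReal (∫ p, pepsC ε p a ∂ξ) := by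
  have disj : Pairwise (Disjoint on selEvent (d := d) ε) := fun b c hbc =>
    Set.disjoint_left.2 fun x hb hc => hbc (hb.1.symm.trans hc.1)
  rw [setOf_lt_eq_iUnion_selEvent, measure_iUnion disj (measurableSet_selEvent ε), tsum_fintype]
  simp [tripleLaw_selEvent hκ hξ, integral_pepsC_eq_of_map_comp_perm hξ_sym ε _ a]

-- Centring at the mean over `u` rather than at `p a` keeps it bounded off the simplex.
noncomputable def centeredSelIntegrand (κ : ℝ → (Fin d → ℝ) → Fin d → ℝ) (ε : ℝ) (a : Fin d)
    (u : ℝ) (p : Fin d → ℝ) : ℝ :=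
  if ε < p a then κ u p a - ∫ v, κ v p a ∂𝕌 else 0

theorem measurable_centeredSelIntegrand (hκ : IsSelectionKernel κ) (ε : ℝ) (a : Fin d) :
    Measurable (uncurry (centeredSelIntegrand κ ε a)) :=
  Measurable.ite ((measurable_pi_apply a).comp measurable_snd measurableSet_Ioi)
    ((hκ.measurable_apply a).sub (((hκ.measurable_apply a).stronglyMeasurable.integral_prod_left'
      (μ := 𝕌)).measurable.comp measurable_snd)) measurable_const

theorem abs_centeredSelIntegrand_le_one (hκ : IsSelectionKernel κ) (ε : ℝ) (a : Fin d) (u : ℝ)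
    (p : Fin d → ℝ) : |centeredSelIntegrand κ ε a u p| ≤ 1 := by
  unfold centeredSelIntegrand
  split_ifs
  · have hκ01 := hκ.mem_Icc u p a
    have hmean01 : ∫ v, κ v p a ∂𝕌 ∈ Set.Icc 0 1 := integral_mem_Icc_zero_one
      ((hκ.measurable_apply a).comp measurable_prodMk_right).aemeasurable (hκ.mem_Icc · p a)
    rw [abs_le]
    constructor <;> linarith [hκ01.1, hκ01.2, hmean01.1, hmean01.2]
  · simp

theorem integral_centeredSelIntegrand [IsProbabilityMeasure ξ] (hκ : IsSelectionKernel κ)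
    (hξ : ∀ᵐ p ∂ξ, p ∈ stdSimplex ℝ (Fin d)) (ε : ℝ) (a : Fin d) (u : ℝ) :
    ∫ p, centeredSelIntegrand κ ε a u p ∂ξ = selDensity ξ κ ε a u - ∫ p, pepsC ε p a ∂ξ := by
  have hpeps : Integrable (fun p => pepsC ε p a) ξ :=
    .of_mem_Icc 0 1 (measurable_pepsC ε a).aemeasurable (hξ.mono fun p hp => pepsC_mem_Icc hp ε a)
  rw [selDensity, ← integral_sub (integrable_selIntegrand hκ ε a u) hpeps]
  refine integral_congr_ae ?_
  filter_upwards [hξ] with p hp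
  simp only [centeredSelIntegrand, selIntegrand, pepsC, hκ.integral_eq hp]
  split_ifs <;> simp

theorem integral_centeredSelIntegrand_sq_le (hκ : IsSelectionKernel κ) (ε : ℝ) (a : Fin d)
    {p : Fin d → ℝ} (hp : p ∈ stdSimplex ℝ (Fin d)) :
    ∫ u, centeredSelIntegrand κ ε a u p ^ 2 ∂𝕌 ≤ pepsC ε p a * (1 - pepsC ε p a) := by
  unfold centeredSelIntegrand pepsC
  split_ifs
  · rw [← hκ.integral_eq hp a]
    exact integral_sub_integral_sq_le_of_mem_Icc_zero_one
      ((hκ.measurable_apply a).comp measurable_prodMk_right).aemeasurable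
      (.of_forall fun u => hκ.mem_Icc u p a)
  · simp

theorem integral_sq_selDensity_sub_le [IsProbabilityMeasure ξ] (hκ : IsSelectionKernel κ)
    (hξ : ∀ᵐ p ∂ξ, p ∈ stdSimplex ℝ (Fin d)) (ε : ℝ) (a : Fin d) :
    ∫ u, (selDensity ξ κ ε a u - ∫ p, pepsC ε p a ∂ξ) ^ 2 ∂𝕌 ≤
      (∫ p, √(pepsC ε p a * (1 - pepsC ε p a)) ∂ξ) ^ 2 := by
  simp_rw [← integral_centeredSelIntegrand hκ hξ]
  refine (integral_sq_integral_le_sq_integral_sqrt (μ := 𝕌) (ν := ξ)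
    (measurable_centeredSelIntegrand hκ ε a) (abs_centeredSelIntegrand_le_one hκ ε a)).trans ?_
  refine pow_le_pow_left₀ (integral_nonneg fun p => Real.sqrt_nonneg _) ?_ 2
  refine integral_mono_of_nonneg (.of_forall fun p => Real.sqrt_nonneg _) ?_ ?_
  · refine .of_mem_Icc 0 1 ((measurable_pepsC ε a).mul
      (measurable_const.sub (measurable_pepsC ε a))).sqrt.aemeasurable
      (hξ.mono fun p hp => ⟨Real.sqrt_nonneg _, Real.sqrt_le_one.2 ?_⟩)
    have := pepsC_mem_Icc hp ε a
    nlinarith [this.1, this.2]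
  · filter_upwards [hξ] with p hp
    exact Real.sqrt_le_sqrt (integral_centeredSelIntegrand_sq_le hκ ε a hp)

theorem map_fst_cond_selEvent [IsProbabilityMeasure ξ] (hκ : IsSelectionKernel κ)
    (hξ : ∀ᵐ p ∂ξ, p ∈ stdSimplex ℝ (Fin d)) (a : Fin d) (hZ : 0 < ∫ p, pepsC ε p a ∂ξ) :
    (tripleLaw ξ κ)[|selEvent ε a].map (fun x => x.1.1) =
      (𝕌).withDensity fun u => ENNReal.ofReal (selDensity ξ κ ε a u / ∫ p, pepsC ε p a ∂ξ) := by
  rw [ProbabilityTheory.cond, Measure.map_smul, map_fst_restrict_selEvent hκ a,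
    tripleLaw_selEvent hκ hξ a, ← withDensity_smul _ (measurable_selDensity hκ ε a).ennreal_ofReal]
  congr with u
  rw [ENNReal.ofReal_div_of_pos hZ, ENNReal.div_eq_inv_mul]
  rfl

theorem chiSq_cond_law_le_general {d : ℕ}
    (ξ : Measure (Fin d → ℝ)) [IsProbabilityMeasure ξ]
    (hξ_simplex : ξ {p | (∀ a, 0 ≤ p a) ∧ ∑ a, p a = 1} = 1)
    (hξ_sym : ∀ σ : Equiv.Perm (Fin d), Measure.map (fun p => p ∘ σ) ξ = ξ)
    (κ : ℝ → (Fin d → ℝ) → Fin d → ℝ)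
    (hκ_meas : Measurable fun x : ℝ × (Fin d → ℝ) => κ x.1 x.2)
    (hκ_nonneg : ∀ u p a, 0 ≤ κ u p a) (hκ_sum : ∀ u p, ∑ a, κ u p a = 1)
    (hκ_valid : ∀ p : Fin d → ℝ, (∀ a, 0 ≤ p a) → ∑ a, p a = 1 →
      ∀ a, (∫ u in (0:ℝ)..1, κ u p a) = p a)
    (ε : ℝ)
    (hE : ENNReal.ofReal (1/4) ≤ tripleLaw ξ κ {x | ε < x.1.2 x.2})
    (a : Fin d) :
    chiSq
      (Measure.map (fun x : (ℝ × (Fin d → ℝ)) × Fin d => x.1.1)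
        ((tripleLaw ξ κ)[|{x | x.2 = a ∧ ε < x.1.2 x.2}]))
      (volume.restrict (Set.Icc (0:ℝ) 1))
    ≤ 16 * d ^ 2 *
        (∫ p, Real.sqrt (pepsC ε p a * (1 - pepsC ε p a)) ∂ξ) ^ 2 := by
  have hκ : IsSelectionKernel κ :=
    ⟨hκ_meas, fun u p => ⟨hκ_nonneg u p, hκ_sum u p⟩, fun p hp => hκ_valid p hp.1 hp.2⟩
  have hξ : ∀ᵐ p ∂ξ, p ∈ stdSimplex ℝ (Fin d) :=
    (mem_ae_iff_prob_eq_one (isClosed_stdSimplex ℝ (Fin d)).measurableSet).2 hξ_simplex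
  set Z := ∫ p, pepsC ε p a ∂ξ
  have hdZ : 1 ≤ 4 * d * Z := by
    rw [tripleLaw_setOf_lt hκ hξ hξ_sym a, ← ENNReal.ofReal_natCast,
      ← ENNReal.ofReal_mul (Nat.cast_nonneg d), ENNReal.ofReal_le_ofReal_iff'] at hE
    rcases hE with h | h <;> linarith
  have hZ : 0 < Z := pos_of_mul_pos_right (one_pos.trans_le hdZ) (by positivity)
  rw [show {x | x.2 = a ∧ ε < x.1.2 x.2} = selEvent ε a from rfl,
    map_fst_cond_selEvent hκ hξ a hZ,
    chiSq_withDensity_ofReal ((measurable_selDensity hκ ε a).div_const Z)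
      fun u => div_nonneg (selDensity_mem_Icc hκ ε a u).1 hZ.le]
  set S := ∫ p, √(pepsC ε p a * (1 - pepsC ε p a)) ∂ξ
  calc ∫ u, (selDensity ξ κ ε a u / Z - 1) ^ 2 ∂𝕌
      = (∫ u, (selDensity ξ κ ε a u - Z) ^ 2 ∂𝕌) / Z ^ 2 := by
        rw [← integral_div]
        congr with u
        field_simp
    _ ≤ S ^ 2 / Z ^ 2 :=
        div_le_div_of_nonneg_right (integral_sq_selDensity_sub_le hκ hξ ε a) (sq_nonneg Z)
    _ ≤ 16 * d ^ 2 * S ^ 2 := by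
        rw [div_le_iff₀ (by positivity)]
        nlinarith [mul_le_mul_of_nonneg_left (one_le_pow₀ hdZ : 1 ≤ (4 * d * Z) ^ 2) (sq_nonneg S)]

/-- Let `(U,P,A) ∼ λ ⊗ ξ ⊗ κ` with `ξ` a symmetric probability measure on the
simplex and `κ` a valid selection kernel.  Fix `ε ∈ (0,1/2)`, let
`E = {P(A) > ε}` and assume `P(E) ≥ 1/4`.  Then, with `μ(·|a)` the conditional
law of `U` given `{A = a} ∩ E`,
`χ²(μ(·|a), λ) ≤ 16 d² (E[√(P_ε^c(a)(1 − P_ε^c(a)))])²`. -/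
theorem chiSq_cond_law_le {d : ℕ} (hd : 0 < d)
    (ξ : Measure (Fin d → ℝ)) [IsProbabilityMeasure ξ]
    (hξ_simplex : ξ {p | (∀ a, 0 ≤ p a) ∧ ∑ a, p a = 1} = 1)
    (hξ_sym : ∀ σ : Equiv.Perm (Fin d), Measure.map (fun p => p ∘ σ) ξ = ξ)
    (κ : ℝ → (Fin d → ℝ) → Fin d → ℝ)
    (hκ_meas : Measurable fun x : ℝ × (Fin d → ℝ) => κ x.1 x.2)
    (hκ_nonneg : ∀ u p a, 0 ≤ κ u p a) (hκ_sum : ∀ u p, ∑ a, κ u p a = 1)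
    (hκ_valid : ∀ p : Fin d → ℝ, (∀ a, 0 ≤ p a) → ∑ a, p a = 1 →
      ∀ a, (∫ u in (0:ℝ)..1, κ u p a) = p a)
    (ε : ℝ) (hε : ε ∈ Set.Ioo (0:ℝ) (1/2))
    (hE : ENNReal.ofReal (1/4) ≤ tripleLaw ξ κ {x | ε < x.1.2 x.2})
    (a : Fin d) :
    chiSq
      (Measure.map (fun x : (ℝ × (Fin d → ℝ)) × Fin d => x.1.1)
        ((tripleLaw ξ κ)[|{x | x.2 = a ∧ ε < x.1.2 x.2}]))
      (volume.restrict (Set.Icc (0:ℝ) 1))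
    ≤ 16 * d ^ 2 *
        (∫ p, Real.sqrt (pepsC ε p a * (1 - pepsC ε p a)) ∂ξ) ^ 2 :=
  chiSq_cond_law_le_general ξ hξ_simplex hξ_sym κ hκ_meas hκ_nonneg hκ_sum hκ_valid ε hE a
end

section
/- Let σ > 0 and let X be a real random variable with E[X] = 0 and E[exp(|X/σ|)] ≤ 2, and let E be a {0,1}-valued random variable (on the same probability space) with P(E = 1) = p ∈ (0,1). Then E[X·E] ≤ ((1 + log 2)/log 2) · σ · h(p), where h(p) = −p log p − (1−p) log(1−p) is the binary entropy. -/
/-!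
Set `c = (1 + log 2) / log 2`. For `t ∈ ℝ` the tangent-line bound `s ≤ t + exp (s - t)` at
`s = |x/σ|` gives `x ≤ σ t + σ e^{-t} exp |x/σ|`; integrating over an event `A` of probability
`q` and choosing `e^{-t} = q/2` yields `∫_A X ≤ σ q (1 + log 2 - log q)`, and for `q ≤ 1/2` this
is at most `c σ h(q)` since `h(q) ≥ q (1/2 - log q)` and `log 2 < 1`. Since `E[X] = 0`,
`∫_A X = ∫_{Aᶜ} (-X)`, so the bound applied to whichever of `A`, `Aᶜ` has probability at most
`1/2` gives `∫_A X ≤ c σ h(P(A))`, using `h(1 - q) = h(q)`.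
-/

open MeasureTheory Real

lemma binEntropy_eq_neg_mul_log_sub_mul_log (p : ℝ) :
    binEntropy p = -(p * log p) - (1 - p) * log (1 - p) := by
  simp only [binEntropy, log_inv]
  ring

lemma le_add_exp_neg_mul_exp_abs (x t : ℝ) : x ≤ t + exp (-t) * exp |x| := by
  have hx := le_abs_self x
  have := add_one_le_exp (|x| - t)
  rw [sub_eq_neg_add, exp_add] at this
  linarith

lemma le_mul_add_mul_exp_neg_mul_exp_abs_div {σ : ℝ} (hσ : 0 < σ) (x t : ℝ) :
    x ≤ σ * t + σ * exp (-t) * exp |x / σ| := by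
  calc x = σ * (x / σ) := by field_simp
    _ ≤ σ * (t + exp (-t) * exp |x / σ|) :=
      mul_le_mul_of_nonneg_left (le_add_exp_neg_mul_exp_abs _ t) hσ.le
    _ = _ := by ring

section SetIntegral

variable {Ω : Type*} [MeasurableSpace Ω] {μ : Measure Ω} {σ : ℝ} {Y : Ω → ℝ} {A : Set Ω}

lemma setIntegral_le_mul_add_mul_exp_neg_mul_integral_exp_abs_div [IsFiniteMeasure μ]
    (hσ : 0 < σ) (hY : Integrable Y μ) (hexpY : Integrable (fun ω => exp |Y ω / σ|) μ)
    (hA : MeasurableSet A) (t : ℝ) :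
    ∫ ω in A, Y ω ∂μ ≤ σ * t * μ.real A + σ * exp (-t) * ∫ ω, exp |Y ω / σ| ∂μ := by
  have hbound : Integrable (fun ω => σ * t + σ * exp (-t) * exp |Y ω / σ|) μ :=
    (integrable_const _).add (hexpY.const_mul _)
  have hexp_on_A : ∫ ω in A, exp |Y ω / σ| ∂μ ≤ ∫ ω, exp |Y ω / σ| ∂μ :=
    setIntegral_le_integral hexpY (.of_forall fun ω => (exp_pos _).le)
  calc ∫ ω in A, Y ω ∂μ ≤ ∫ ω in A, (σ * t + σ * exp (-t) * exp |Y ω / σ|) ∂μ :=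
        setIntegral_mono_on hY.integrableOn hbound.integrableOn hA
          fun ω _ => le_mul_add_mul_exp_neg_mul_exp_abs_div hσ (Y ω) t
    _ = σ * t * μ.real A + σ * exp (-t) * ∫ ω in A, exp |Y ω / σ| ∂μ := by
        rw [integral_add (integrable_const _).integrableOn (hexpY.const_mul _).integrableOn,
          setIntegral_const, integral_const_mul, smul_eq_mul, mul_comm (μ.real A)]
    _ ≤ _ := by gcongr

lemma setIntegral_le_mul_one_add_log_two_sub_log [IsFiniteMeasure μ]
    (hσ : 0 < σ) (hY : Integrable Y μ) (hexpY : Integrable (fun ω => exp |Y ω / σ|) μ)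
    (hexp : ∫ ω, exp |Y ω / σ| ∂μ ≤ 2) (hA : MeasurableSet A) (hμA : 0 < μ.real A) :
    ∫ ω in A, Y ω ∂μ ≤ σ * μ.real A * (1 + log 2 - log (μ.real A)) := by
  set q := μ.real A
  have hexp_t : exp (-(log 2 - log q)) = q / 2 := by
    rw [neg_sub, exp_sub, exp_log hμA, exp_log two_pos]
  calc ∫ ω in A, Y ω ∂μ
      ≤ σ * (log 2 - log q) * q + σ * exp (-(log 2 - log q)) * ∫ ω, exp |Y ω / σ| ∂μ :=
        setIntegral_le_mul_add_mul_exp_neg_mul_integral_exp_abs_div hσ hY hexpY hA _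
    _ ≤ σ * (log 2 - log q) * q + σ * (q / 2) * 2 := by
        rw [hexp_t]; gcongr
    _ = σ * q * (1 + log 2 - log q) := by ring

end SetIntegral

lemma mul_half_sub_log_le_binEntropy {q : ℝ} (hq₀ : 0 < q) (hq : q ≤ 1 / 2) :
    q * (1 / 2 - log q) ≤ binEntropy q := by
  have hlog : log (1 - q) ≤ -q := by linarith [log_le_sub_one_of_pos (by linarith : 0 < 1 - q)]
  have : q / 2 ≤ -((1 - q) * log (1 - q)) := by nlinarith
  rw [binEntropy_eq_neg_mul_log_sub_mul_log]
  linarith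

lemma mul_one_add_log_two_sub_log_le_binEntropy {q : ℝ} (hq₀ : 0 < q) (hq : q ≤ 1 / 2) :
    q * (1 + log 2 - log q) ≤ (1 + log 2) / log 2 * binEntropy q := by
  have hlog2 : 0 < log 2 := log_pos one_lt_two
  have hlog2_lt : log 2 < 1 := by linarith [log_two_lt_d9]
  have hlogq : log 2 ≤ -log q := by
    rw [← log_inv]; exact log_le_log (by norm_num) (by rw [le_inv_comm₀] <;> linarith)
  -- `(1 + log 2) (log 2 - 1/2) ≤ log 2 ≤ -log q` because `log 2 < 1`
  have key : log 2 * (1 + log 2 - log q) ≤ (1 + log 2) * (1 / 2 - log q) := by nlinarith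
  rw [div_mul_eq_mul_div, le_div_iff₀ hlog2]
  calc q * (1 + log 2 - log q) * log 2 = q * (log 2 * (1 + log 2 - log q)) := by ring
    _ ≤ q * ((1 + log 2) * (1 / 2 - log q)) := by gcongr
    _ = (1 + log 2) * (q * (1 / 2 - log q)) := by ring
    _ ≤ (1 + log 2) * binEntropy q := by
        gcongr; exact mul_half_sub_log_le_binEntropy hq₀ hq

section MeanZero

variable {Ω : Type*} [MeasurableSpace Ω] {μ : Measure Ω} [IsProbabilityMeasure μ] {σ : ℝ}
  {X : Ω → ℝ} {A : Set Ω}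

lemma setIntegral_le_binEntropy_of_integral_eq_zero (hσ : 0 < σ) (hX : Integrable X μ)
    (hX_mean : ∫ ω, X ω ∂μ = 0) (hexpX : Integrable (fun ω => exp |X ω / σ|) μ)
    (hexp : ∫ ω, exp |X ω / σ| ∂μ ≤ 2) (hA : MeasurableSet A) (hμA₀ : 0 < μ.real A)
    (hμA₁ : μ.real A < 1) :
    ∫ ω in A, X ω ∂μ ≤ (1 + log 2) / log 2 * σ * binEntropy (μ.real A) := by
  rcases le_or_gt (μ.real A) (1 / 2) with hsmall | hlarge
  · calc ∫ ω in A, X ω ∂μ ≤ σ * (μ.real A * (1 + log 2 - log (μ.real A))) := by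
          rw [← mul_assoc]
          exact setIntegral_le_mul_one_add_log_two_sub_log hσ hX hexpX hexp hA hμA₀
      _ ≤ σ * ((1 + log 2) / log 2 * binEntropy (μ.real A)) :=
          mul_le_mul_of_nonneg_left (mul_one_add_log_two_sub_log_le_binEntropy hμA₀ hsmall) hσ.le
      _ = _ := by ring
  · have hμAc : μ.real Aᶜ = 1 - μ.real A := probReal_compl_eq_one_sub hA
    have hnegX : ∫ ω in Aᶜ, -X ω ∂μ ≤ σ * μ.real Aᶜ * (1 + log 2 - log (μ.real Aᶜ)) := by
      refine setIntegral_le_mul_one_add_log_two_sub_log hσ hX.neg ?_ ?_ hA.compl (by rw [hμAc]; linarith)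
      all_goals simpa only [neg_div, abs_neg]
    have hreflect : ∫ ω in A, X ω ∂μ = ∫ ω in Aᶜ, -X ω ∂μ := by
      rw [integral_neg]; linarith [integral_add_compl hA hX]
    calc ∫ ω in A, X ω ∂μ ≤ σ * (μ.real Aᶜ * (1 + log 2 - log (μ.real Aᶜ))) := by
          rw [hreflect, ← mul_assoc]; exact hnegX
      _ ≤ σ * ((1 + log 2) / log 2 * binEntropy (μ.real Aᶜ)) := by
          refine mul_le_mul_of_nonneg_left ?_ hσ.le
          exact mul_one_add_log_two_sub_log_le_binEntropy (by linarith) (by linarith)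
      _ = _ := by rw [hμAc, binEntropy_one_sub]; ring

end MeanZero

lemma integral_mul_eq_setIntegral_of_eq_zero_or_eq_one {Ω : Type*} [MeasurableSpace Ω]
    {μ : Measure Ω} {X E : Ω → ℝ} (hE01 : ∀ ω, E ω = 0 ∨ E ω = 1) (hE : Measurable E) :
    ∫ ω, X ω * E ω ∂μ = ∫ ω in {ω | E ω = 1}, X ω ∂μ := by
  have hA : MeasurableSet {ω | E ω = 1} := hE (measurableSet_singleton 1)
  rw [← integral_indicator hA]
  congr 1 with ω
  rcases hE01 ω with h | h <;> simp [Set.indicator, h]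

/-- Let `σ > 0` and let `X` be a real random variable with `E[X] = 0` and
`E[exp(|X/σ|)] ≤ 2`, and let `E` be a `{0,1}`-valued random variable with
`P(E = 1) = p ∈ (0,1)`.  Then
`E[X·E] ≤ ((1 + log 2)/log 2) · σ · h(p)` where `h` is the binary entropy. -/
theorem expectation_mul_indicator_le_binEntropy
    {Ω : Type*} [MeasurableSpace Ω] (μ : Measure Ω) [IsProbabilityMeasure μ]
    (σ : ℝ) (hσ : 0 < σ) (X E : Ω → ℝ)
    (hX_int : Integrable X μ) (hX_mean : ∫ ω, X ω ∂μ = 0)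
    (hexp_int : Integrable (fun ω => Real.exp |X ω / σ|) μ)
    (hexp : ∫ ω, Real.exp |X ω / σ| ∂μ ≤ 2)
    (hE01 : ∀ ω, E ω = 0 ∨ E ω = 1) (hE_meas : Measurable E)
    (p : ℝ) (hp : p ∈ Set.Ioo (0:ℝ) 1) (hEp : μ {ω | E ω = 1} = ENNReal.ofReal p) :
    ∫ ω, X ω * E ω ∂μ ≤
      ((1 + Real.log 2) / Real.log 2) * σ *
        (-(p * Real.log p) - (1 - p) * Real.log (1 - p)) := by
  have hμA : μ.real {ω | E ω = 1} = p := by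
    rw [measureReal_def, hEp, ENNReal.toReal_ofReal hp.1.le]
  rw [integral_mul_eq_setIntegral_of_eq_zero_or_eq_one hE01 hE_meas,
    ← binEntropy_eq_neg_mul_log_sub_mul_log, ← hμA]
  exact setIntegral_le_binEntropy_of_integral_eq_zero hσ hX_int hX_mean hexp_int hexp
    (hE_meas (measurableSet_singleton 1)) (hμA ▸ hp.1) (hμA ▸ hp.2)
end

section
/- Let σ > 0 and let X be a real random variable with E[exp(|X/σ|)] ≤ 2, and let E be a {0,1}-valued random variable (on the same probability space) with P(E = 1) = p ∈ (0,1]. Then E[|X|·E] ≤ p·σ·(1 + log(1/p)). -/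
/-!
Fenchel–Young duality between `exp` and `y ↦ y log y - y` gives, for every `t ≥ 0`,
`t |X/σ| E ≤ exp |X/σ| + E (t log t - t)` pointwise. Integrating and choosing `t = 2/p` yields
`∫ |X/σ| E ∂μ ≤ p log (2/p)`, and `log 2 ≤ 1` finishes.
-/

open MeasureTheory Real

theorem Real.mul_le_exp_add_mul_log_sub (x : ℝ) {y : ℝ} (hy : 0 ≤ y) :
    x * y ≤ exp x + (y * log y - y) := by
  rcases hy.eq_or_lt with rfl | hy
  · simpa using (exp_pos x).le
  -- `x - log y + 1 ≤ exp (x - log y) = exp x / y`, multiplied by `y`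
  have h := add_one_le_exp (x - log y)
  rw [exp_sub, exp_log hy, le_div_iff₀ hy] at h
  linarith

theorem Real.mul_mul_le_exp_add_mul (x : ℝ) {t w : ℝ} (ht : 0 ≤ t) (hw₀ : 0 ≤ w) (hw₁ : w ≤ 1) :
    t * (x * w) ≤ exp x + w * (t * log t - t) :=
  calc t * (x * w) = w * (x * t) := by ring
    _ ≤ w * (exp x + (t * log t - t)) :=
      mul_le_mul_of_nonneg_left (mul_le_exp_add_mul_log_sub x ht) hw₀
    _ ≤ exp x + w * (t * log t - t) := by nlinarith [exp_pos x]

namespace MeasureTheory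

variable {Ω : Type*} [MeasurableSpace Ω] {μ : Measure Ω} {Y w : Ω → ℝ}

theorem mul_integral_mul_le_integral_exp_add (hY : 0 ≤ᵐ[μ] Y) (hw₀ : 0 ≤ᵐ[μ] w)
    (hw₁ : w ≤ᵐ[μ] 1) (hexp : Integrable (fun ω => exp (Y ω)) μ) (hw : Integrable w μ)
    {t : ℝ} (ht : 0 ≤ t) :
    t * ∫ ω, Y ω * w ω ∂μ ≤ ∫ ω, exp (Y ω) ∂μ + (∫ ω, w ω ∂μ) * (t * log t - t) := by
  rw [← integral_const_mul, ← integral_mul_const, ← integral_add hexp (hw.mul_const _)]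
  refine integral_mono_of_nonneg ?_ (hexp.add (hw.mul_const _)) ?_
  · filter_upwards [hY, hw₀] with ω hYω hwω
    exact mul_nonneg ht (mul_nonneg hYω hwω)
  · filter_upwards [hw₀, hw₁] with ω hwω₀ hwω₁
    simpa [mul_comm _ (w ω)] using mul_mul_le_exp_add_mul (Y ω) ht hwω₀ hwω₁

theorem integral_mul_le_mul_log_of_integral_exp_le (hY : 0 ≤ᵐ[μ] Y) (hw₀ : 0 ≤ᵐ[μ] w)
    (hw₁ : w ≤ᵐ[μ] 1) (hexp : Integrable (fun ω => exp (Y ω)) μ) (hw : Integrable w μ)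
    {M p : ℝ} (hM : 0 < M) (hexpM : ∫ ω, exp (Y ω) ∂μ ≤ M) (hp : 0 < p)
    (hwp : ∫ ω, w ω ∂μ = p) :
    ∫ ω, Y ω * w ω ∂μ ≤ p * log (M / p) := by
  set t := M / p
  have ht : 0 < t := by positivity
  have hpt : p * t = M := mul_div_cancel₀ M hp.ne'
  have key := mul_integral_mul_le_integral_exp_add hY hw₀ hw₁ hexp hw ht.le
  rw [hwp] at key
  refine le_of_mul_le_mul_left ?_ ht
  calc t * ∫ ω, Y ω * w ω ∂μ ≤ M + p * (t * log t - t) := by linarith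
    _ = t * (p * log t) := by rw [← hpt]; ring

theorem integral_eq_measureReal_of_zero_or_one {E : Ω → ℝ} (hE : Measurable E)
    (h01 : ∀ ω, E ω = 0 ∨ E ω = 1) :
    ∫ ω, E ω ∂μ = μ.real {ω | E ω = 1} := by
  have hE_ind : E = {ω | E ω = 1}.indicator 1 := by
    funext ω
    rcases h01 ω with h | h <;> simp [h]
  conv_lhs => rw [hE_ind]
  exact integral_indicator_one (hE (measurableSet_singleton 1))

theorem integrable_of_zero_or_one [IsFiniteMeasure μ] {E : Ω → ℝ} (hE : Measurable E)
    (h01 : ∀ ω, E ω = 0 ∨ E ω = 1) : Integrable E μ := by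
  refine (integrable_const (1 : ℝ)).mono hE.aestronglyMeasurable (ae_of_all _ fun ω => ?_)
  rcases h01 ω with h | h <;> simp [h]

end MeasureTheory

theorem expectation_abs_mul_indicator_le_general
    {Ω : Type*} [MeasurableSpace Ω] (μ : Measure Ω) [IsProbabilityMeasure μ]
    (σ : ℝ) (hσ : 0 < σ) (X E : Ω → ℝ)
    (hexp_int : Integrable (fun ω => Real.exp |X ω / σ|) μ)
    (hexp : ∫ ω, Real.exp |X ω / σ| ∂μ ≤ 2)
    (hE01 : ∀ ω, E ω = 0 ∨ E ω = 1) (hE_meas : Measurable E)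
    (p : ℝ) (hp : p ∈ Set.Ioc (0:ℝ) 1) (hEp : μ {ω | E ω = 1} = ENNReal.ofReal p) :
    ∫ ω, |X ω| * E ω ∂μ ≤ p * σ * (1 + Real.log (1/p)) := by
  obtain ⟨hp₀, -⟩ := hp
  have hE_p : ∫ ω, E ω ∂μ = p := by
    rw [integral_eq_measureReal_of_zero_or_one hE_meas hE01, measureReal_def, hEp,
      ENNReal.toReal_ofReal hp₀.le]
  have hE_bounds : ∀ ω, 0 ≤ E ω ∧ E ω ≤ 1 := fun ω => by rcases hE01 ω with h | h <;> simp [h]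
  have key := integral_mul_le_mul_log_of_integral_exp_le (ae_of_all μ fun ω => abs_nonneg _)
    (ae_of_all μ fun ω => (hE_bounds ω).1) (ae_of_all μ fun ω => (hE_bounds ω).2) hexp_int
    (integrable_of_zero_or_one hE_meas hE01) two_pos hexp hp₀ hE_p
  calc ∫ ω, |X ω| * E ω ∂μ = σ * ∫ ω, |X ω / σ| * E ω ∂μ := by
        rw [← integral_const_mul]
        congr 1 with ω
        rw [abs_div, abs_of_pos hσ]
        field_simp
    _ ≤ σ * (p * log (2 / p)) := by gcongr
    _ = p * σ * (log 2 + log (1 / p)) := by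
        rw [log_div two_ne_zero hp₀.ne', one_div, log_inv]
        ring
    _ ≤ p * σ * (1 + log (1 / p)) := by
        gcongr
        linarith [log_two_lt_d9]

/-- Let `σ > 0` and let `X` be a real random variable with `E[exp(|X/σ|)] ≤ 2`,
and let `E` be a `{0,1}`-valued random variable with `P(E = 1) = p ∈ (0,1]`.
Then `E[|X|·E] ≤ p·σ·(1 + log(1/p))`. -/
theorem expectation_abs_mul_indicator_le
    {Ω : Type*} [MeasurableSpace Ω] (μ : Measure Ω) [IsProbabilityMeasure μ]
    (σ : ℝ) (hσ : 0 < σ) (X E : Ω → ℝ)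
    (hX_int : Integrable X μ)
    (hexp_int : Integrable (fun ω => Real.exp |X ω / σ|) μ)
    (hexp : ∫ ω, Real.exp |X ω / σ| ∂μ ≤ 2)
    (hE01 : ∀ ω, E ω = 0 ∨ E ω = 1) (hE_meas : Measurable E)
    (p : ℝ) (hp : p ∈ Set.Ioc (0:ℝ) 1) (hEp : μ {ω | E ω = 1} = ENNReal.ofReal p) :
    ∫ ω, |X ω| * E ω ∂μ ≤ p * σ * (1 + Real.log (1/p)) :=
  expectation_abs_mul_indicator_le_general μ σ hσ X E hexp_int hexp hE01 hE_meas p hp hEp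
end

section
/- For every p ∈ (0,1), min( p(1 + log(1/p)), (1−p)(1 + log(1/(1−p))) ) ≤ ((1 + log 2)/log 2) · h(p), where h(p) = −p log p − (1−p) log(1−p) is the binary entropy. -/
/-! Since `binEntropy` is symmetric about `1/2`, it suffices to treat `p ≤ 1/2`. There
`log p⁻¹ ≥ log 2`, so both `p * log 2` and `p * log p⁻¹` are bounded by the first summand
`p * log p⁻¹` of `binEntropy p`; adding the two bounds gives the constant `1 + 1 / log 2`. -/

open Real

namespace Real

variable {p : ℝ}

lemma mul_log_inv_le_binEntropy (hp₀ : 0 ≤ p) (hp₁ : p ≤ 1) : p * log p⁻¹ ≤ binEntropy p := by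
  have : 0 ≤ (1 - p) * log (1 - p)⁻¹ :=
    mul_nonneg (by linarith) (log_inv (1 - p) ▸ neg_nonneg.2 (log_nonpos (by linarith) (by linarith)))
  rw [binEntropy]
  linarith

lemma mul_log_two_le_binEntropy (hp₀ : 0 ≤ p) (hp : p ≤ 2⁻¹) : p * log 2 ≤ binEntropy p := by
  refine le_trans ?_ (mul_log_inv_le_binEntropy hp₀ (by linarith))
  rcases hp₀.eq_or_lt with rfl | hp₀
  · simp
  exact mul_le_mul_of_nonneg_left (log_le_log two_pos (le_inv_comm₀ hp₀ two_pos |>.1 hp)) hp₀.le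

lemma mul_one_add_log_inv_le_binEntropy (hp₀ : 0 ≤ p) (hp : p ≤ 2⁻¹) :
    p * (1 + log p⁻¹) ≤ (1 + log 2) / log 2 * binEntropy p := by
  have hlog2 : 0 < log 2 := log_pos one_lt_two
  have hp_le : p ≤ binEntropy p / log 2 := (le_div_iff₀ hlog2).2 (mul_log_two_le_binEntropy hp₀ hp)
  calc p * (1 + log p⁻¹) = p + p * log p⁻¹ := by ring
    _ ≤ binEntropy p / log 2 + binEntropy p :=
      add_le_add hp_le (mul_log_inv_le_binEntropy hp₀ (by linarith))
    _ = (1 + log 2) / log 2 * binEntropy p := by field_simp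

end Real

/-- For every `p ∈ (0,1)`,
`min(p(1 + log(1/p)), (1−p)(1 + log(1/(1−p)))) ≤ ((1 + log 2)/log 2) · h(p)`,
where `h(p) = −p log p − (1−p) log(1−p)` is the binary entropy. -/
theorem min_le_const_mul_binEntropy (p : ℝ) (hp : p ∈ Set.Ioo (0:ℝ) 1) :
    min (p * (1 + Real.log (1/p))) ((1 - p) * (1 + Real.log (1/(1-p))))
      ≤ ((1 + Real.log 2) / Real.log 2) *
          (-(p * Real.log p) - (1 - p) * Real.log (1 - p)) := by
  have hH : -(p * log p) - (1 - p) * log (1 - p) = binEntropy p := by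
    simp only [binEntropy, log_inv]
    ring
  rw [hH, one_div, one_div]
  rcases le_or_gt p 2⁻¹ with hp_half | hp_half
  · exact (min_le_left _ _).trans (mul_one_add_log_inv_le_binEntropy hp.1.le hp_half)
  · refine (min_le_right _ _).trans ?_
    simpa only [binEntropy_one_sub] using
      mul_one_add_log_inv_le_binEntropy (p := 1 - p) (by linarith [hp.2]) (by linarith)
end
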